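/- arXiv:0711.2134 — 4 statements merged into one kernel-verified Lean document; each statement's English description precedes it below -/
import Mathlib

section
/- Decay for the modulated non-autonomous linearized Toda equation: Let c₀ > 1, a ∈ (0, 2κ(c₀)), b ∈ (0, c₀a − 2 sinh(a/2)), and let K be the constant of the linearized decay estimate for these c₀, a, b. Let 0 ≤ T ≤ ∞ and let γ ∈ C¹([0,T];ℝ) with γ̇(t) ≥ 1/2 for all t ∈ [0,T]. Let 0 ≤ τ ≤ T, let φ ∈ ℓ²_a satisfy ⟨φ, J⁻¹u̇_{c₀}(γ(τ))⟩ = 0 and ⟨φ, J⁻¹∂_c u_{c₀}(γ(τ))⟩ = 0, and let v = (r,p) : [τ,T] → ℓ²_a be the C¹ solution of ∂_t r(t,n) = γ̇(t)(p(t,n+1) − p(t,n)), ∂_t p(t,n) = γ̇(t)( e^{−r̃_{c₀}(n−c₀γ(t))} r(t,n) − e^{−r̃_{c₀}(n−1−c₀γ(t))} r(t,n−1) ) with v(τ) = φ. Then e^{−ac₀γ(t)} ‖v(t)‖_{ℓ²_a} ≤ K e^{−b(t−τ)/2} e^{−ac₀γ(τ)} ‖φ‖_{ℓ²_a} for all τ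 ≤ t ≤ T. -/
open Real Filter Set MeasureTheory

namespace TodaPaper

noncomputable section

/-- The squared Euclidean norm on `ℝ × ℝ`. -/
def nsq (w : ℝ × ℝ) : ℝ := w.1 ^ 2 + w.2 ^ 2

/-- Membership in `ℓ²(ℤ; ℝ²)`. -/
def Meml2 (u : ℤ → ℝ × ℝ) : Prop := Summable fun n : ℤ => nsq (u n)

/-- The `ℓ²(ℤ; ℝ²)` norm. -/
def l2norm (u : ℤ → ℝ × ℝ) : ℝ := Real.sqrt (∑' n : ℤ, nsq (u n))

/-- Membership in the exponentially weighted space `ℓ²_a`. -/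
def Meml2w (a : ℝ) (u : ℤ → ℝ × ℝ) : Prop :=
  Summable fun n : ℤ => Real.exp (2 * a * n) * nsq (u n)

/-- The `ℓ²_a` norm. -/
def wnorm (a : ℝ) (u : ℤ → ℝ × ℝ) : ℝ :=
  Real.sqrt (∑' n : ℤ, Real.exp (2 * a * n) * nsq (u n))

/-- The Toda potential `V(r) = e^{-r} - 1 + r`. -/
def V (r : ℝ) : ℝ := Real.exp (-r) - 1 + r

/-- Derivative of the Toda potential, `V'(r) = 1 - e^{-r}`. -/
def V' (r : ℝ) : ℝ := 1 - Real.exp (-r)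

/-- `u = (r, p)` is a solution of the Toda lattice. -/
structure IsTodaSolution (u : ℝ → ℤ → ℝ × ℝ) : Prop where
  mem : ∀ t, Meml2 (u t)
  dr : ∀ t n, HasDerivAt (fun s => (u s n).1) ((u t (n + 1)).2 - (u t n).2) t
  dp : ∀ t n, HasDerivAt (fun s => (u s n).2) (V' (u t n).1 - V' (u t (n - 1)).1) t

/-- The decay rate `κ(c)`, the (unique, for `c > 1`) positive root of `sinh κ = c κ`. -/
def kappa (c : ℝ) : ℝ := Classical.epsilon fun k : ℝ => 0 < k ∧ Real.sinh k = c * k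

/-- The soliton displacement profile `q̃_c`. -/
def qt (c x : ℝ) : ℝ := Real.log (Real.cosh (kappa c * (x - 1)) / Real.cosh (kappa c * x))

/-- The soliton momentum profile `p̃_c = -c q̃_c'`. -/
def ptil (c : ℝ) : ℝ → ℝ := fun x => -c * deriv (qt c) x

/-- The soliton relative-displacement profile `r̃_c(x) = q̃_c(x+1) - q̃_c(x)`. -/
def rtil (c : ℝ) : ℝ → ℝ := fun x => qt c (x + 1) - qt c x

/-- The soliton profile `ũ_c = (r̃_c, p̃_c)`. -/
def solProfile (c : ℝ) (x : ℝ) : ℝ × ℝ := (rtil c x, ptil c x)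

/-- The soliton `u_c(γ)(n) = ũ_c(n - cγ)`. -/
def uc (c γ : ℝ) : ℤ → ℝ × ℝ := fun n => solProfile c ((n : ℝ) - c * γ)

/-- The neutral mode `u̇_c(γ)(n) = -c ũ_c'(n - cγ)`. -/
def ucDot (c γ : ℝ) : ℤ → ℝ × ℝ := fun n => (-c) • deriv (solProfile c) ((n : ℝ) - c * γ)

/-- The neutral mode `∂_c u_c(γ)(n)`. -/
def ucDc (c γ : ℝ) : ℤ → ℝ × ℝ := fun n => deriv (fun c' => solProfile c' ((n : ℝ) - c' * γ)) c

/-- The `ℓ²` pairing `⟨u, v⟩ = Σ_n (u₁ v₁ + u₂ v₂)`. -/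
def pairing (u v : ℤ → ℝ × ℝ) : ℝ := ∑' n : ℤ, ((u n).1 * (v n).1 + (u n).2 * (v n).2)

/-- The operator `J⁻¹ : (r,p) ↦ (Σ_{k=0}^∞ p(·-k), Σ_{k=1}^∞ r(·-k))`. -/
def Jinv (u : ℤ → ℝ × ℝ) : ℤ → ℝ × ℝ := fun n =>
  (∑' k : ℕ, (u (n - (k : ℤ))).2, ∑' k : ℕ, (u (n - 1 - (k : ℤ))).1)

/-- `v` solves the Toda lattice linearized along the 1-soliton `u_{c₀}` for `t ≥ τ`. -/
def IsLinTodaSol (c₀ τ : ℝ) (v : ℝ → ℤ → ℝ × ℝ) : Prop :=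
  ∀ t : ℝ, τ ≤ t → ∀ n : ℤ,
    HasDerivAt (fun s => (v s n).1) ((v t (n + 1)).2 - (v t n).2) t ∧
    HasDerivAt (fun s => (v s n).2)
      (Real.exp (-(rtil c₀ ((n : ℝ) - c₀ * t))) * (v t n).1
        - Real.exp (-(rtil c₀ ((n : ℝ) - 1 - c₀ * t))) * (v t (n - 1)).1) t

/-- The linearized decay estimate with rate `b` and constant `K` in `ℓ²_a`,
for the linearization along the 1-soliton of speed `c₀`. -/
def LinDecayEst (c₀ a b K : ℝ) : Prop :=
  ∀ (τ : ℝ) (v : ℝ → ℤ → ℝ × ℝ), IsLinTodaSol c₀ τ v →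
    (∀ t : ℝ, τ ≤ t → Meml2w a (v t)) →
    pairing (v τ) (Jinv (ucDot c₀ τ)) = 0 →
    pairing (v τ) (Jinv (ucDc c₀ τ)) = 0 →
    ∀ t : ℝ, τ ≤ t →
      Real.exp (-(a * c₀ * (t - τ))) * wnorm a (v t) ≤
        K * Real.exp (-(b * (t - τ))) * wnorm a (v τ)

open scoped NNReal ENNReal lp Topology

/-!
Reparametrize time by `s = γ t`. Since `γ̇ ≥ 1/2`, the map `γ` (extended affinely beyond `[τ, t]`)
is an order isomorphism of `ℝ`, and `w s = v (γ⁻¹ s)` solves the linearized Toda equation along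
`u_{c₀}` on `[γ τ, γ t]` with the orthogonal data `φ` at `s = γ τ`. The linearized decay estimate
concerns solutions defined for all later times, so `w` is continued past `γ t` by a solution in
`ℓ²_a`. That solution exists because, conjugated by the weight `e^{an}`, the linearized field is a
uniformly bounded operator on `ℓ²` depending Lipschitz-continuously on time (its coefficient is
`1 + sinh² κ / cosh² (κ (n - c₀ s))`), so Picard–Lindelöf steps of a fixed length can be
concatenated. The estimate at time `γ t`, together with `γ t - γ τ ≥ (t - τ) / 2`, gives the claim.
-/

section Calculus

variable {E : Type*} [NormedAddCommGroup E] [NormedSpace ℝ E]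

theorem _root_.HasDerivWithinAt.union_of_isClosed {f : ℝ → E} {f' : E} {s t : Set ℝ} {x : ℝ}
    (hs : IsClosed s) (ht : IsClosed t) (hx : x ∈ s ∪ t)
    (hfs : x ∈ s → HasDerivWithinAt f f' s x) (hft : x ∈ t → HasDerivWithinAt f f' t x) :
    HasDerivWithinAt f f' (s ∪ t) x := by
  by_cases hxs : x ∈ s <;> by_cases hxt : x ∈ t
  · exact (hfs hxs).union (hft hxt)
  · refine (hfs hxs).mono_of_mem_nhdsWithin ?_
    exact mem_nhdsWithin.2 ⟨tᶜ, ht.isOpen_compl, hxt, fun y hy => hy.2.resolve_right hy.1⟩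
  · refine (hft hxt).mono_of_mem_nhdsWithin ?_
    exact mem_nhdsWithin.2 ⟨sᶜ, hs.isOpen_compl, hxs, fun y hy => hy.2.resolve_left hy.1⟩
  · exact absurd hx (by simp [hxs, hxt])

theorem _root_.HasDerivAt.of_hasDerivWithinAt_Iic_Ici {f : ℝ → E} {f' : E} {a x : ℝ}
    (hl : x ≤ a → HasDerivWithinAt f f' (Iic a) x) (hr : a ≤ x → HasDerivWithinAt f f' (Ici a) x) :
    HasDerivAt f f' x := by
  have := HasDerivWithinAt.union_of_isClosed isClosed_Iic isClosed_Ici (by simp) hl hr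
  rwa [Iic_union_Ici, hasDerivWithinAt_univ] at this

theorem _root_.HasDerivAt.fst {F : Type*} [NormedAddCommGroup F] [NormedSpace ℝ F]
    {f : ℝ → E × F} {f' : E × F} {x : ℝ} (h : HasDerivAt f f' x) :
    HasDerivAt (fun y => (f y).1) f'.1 x := by
  simpa using h.hasFDerivAt.fst.hasDerivAt

theorem _root_.HasDerivAt.snd {F : Type*} [NormedAddCommGroup F] [NormedSpace ℝ F]
    {f : ℝ → E × F} {f' : E × F} {x : ℝ} (h : HasDerivAt f f' x) :
    HasDerivAt (fun y => (f y).2) f'.2 x := by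
  simpa using h.hasFDerivAt.snd.hasDerivAt

def clampIcc (a b t : ℝ) : ℝ := max a (min b t)

theorem clampIcc_mem {a b : ℝ} (hab : a ≤ b) (t : ℝ) : clampIcc a b t ∈ Icc a b :=
  ⟨le_max_left _ _, max_le hab (min_le_left _ _)⟩

theorem clampIcc_of_mem {a b t : ℝ} (ht : t ∈ Icc a b) : clampIcc a b t = t := by
  simp [clampIcc, ht.1, ht.2]

theorem clampIcc_of_le {a b t : ℝ} (ht : t ≤ a) : clampIcc a b t = a := by
  simp [clampIcc, min_le_of_right_le ht]

theorem clampIcc_of_ge {a b t : ℝ} (hab : a ≤ b) (ht : b ≤ t) : clampIcc a b t = b := by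
  simp [clampIcc, hab, ht]

def affineExtend (f : ℝ → E) (f' : ℝ → E) (a b t : ℝ) : E :=
  f (clampIcc a b t) + (t - clampIcc a b t) • f' (clampIcc a b t)

theorem affineExtend_of_mem {f f' : ℝ → E} {a b t : ℝ} (ht : t ∈ Icc a b) :
    affineExtend f f' a b t = f t := by
  simp [affineExtend, clampIcc_of_mem ht]

theorem hasDerivAt_affineExtend {f f' : ℝ → E} {a b : ℝ} (hab : a ≤ b)
    (hf : ∀ t ∈ Icc a b, HasDerivWithinAt f (f' t) (Icc a b) t) (t : ℝ) :
    HasDerivAt (affineExtend f f' a b) (f' (clampIcc a b t)) t := by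
  have hline : ∀ c, HasDerivAt (fun s => f c + (s - c) • f' c) (f' c) t := fun c => by
    simpa using ((hasDerivAt_id t).sub_const c).smul_const (f' c) |>.const_add (f c)
  have hleft : t ≤ a → HasDerivWithinAt (affineExtend f f' a b) (f' (clampIcc a b t)) (Iic a) t :=
    fun ht => by
      rw [clampIcc_of_le ht]
      refine (hline a).hasDerivWithinAt.congr (fun s hs => ?_) ?_
      · simp [affineExtend, clampIcc_of_le (mem_Iic.1 hs)]
      · simp [affineExtend, clampIcc_of_le ht]
  have hright : b ≤ t → HasDerivWithinAt (affineExtend f f' a b) (f' (clampIcc a b t)) (Ici b) t :=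
    fun ht => by
      rw [clampIcc_of_ge hab ht]
      refine (hline b).hasDerivWithinAt.congr (fun s hs => ?_) ?_
      · simp [affineExtend, clampIcc_of_ge hab (mem_Ici.1 hs)]
      · simp [affineExtend, clampIcc_of_ge hab ht]
  have hmid : t ∈ Icc a b →
      HasDerivWithinAt (affineExtend f f' a b) (f' (clampIcc a b t)) (Icc a b) t := fun ht => by
    rw [clampIcc_of_mem ht]
    refine (hf t ht).congr (fun s hs => ?_) ?_
    · simp [affineExtend, clampIcc_of_mem hs]
    · simp [affineExtend, clampIcc_of_mem ht]
  refine HasDerivAt.of_hasDerivWithinAt_Iic_Ici (a := b) (fun htb => ?_) hright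
  rw [← Iic_union_Icc_eq_Iic hab]
  exact .union_of_isClosed isClosed_Iic isClosed_Icc (by simp [htb, le_total]) hleft hmid

theorem _root_.IsIntegralCurveOn.piecewise_Icc {v : ℝ → E → E} {α₁ α₂ : ℝ → E} {a b c : ℝ}
    (hab : a ≤ b) (hbc : b ≤ c) (h₁ : IsIntegralCurveOn α₁ v (Icc a b))
    (h₂ : IsIntegralCurveOn α₂ v (Icc b c)) (hb : α₁ b = α₂ b) :
    IsIntegralCurveOn (fun t => if t ≤ b then α₁ t else α₂ t) v (Icc a c) := by
  intro t ht
  rw [← Icc_union_Icc_eq_Icc hab hbc] at ht ⊢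
  have heq₁ : EqOn (fun t => if t ≤ b then α₁ t else α₂ t) α₁ (Icc a b) := fun s hs => if_pos hs.2
  have heq₂ : EqOn (fun t => if t ≤ b then α₁ t else α₂ t) α₂ (Icc b c) := fun s hs => by
    rcases hs.1.eq_or_lt with rfl | h
    · simp [hb]
    · exact if_neg (not_le.2 h)
  refine .union_of_isClosed isClosed_Icc isClosed_Icc ht (fun hs => ?_) (fun hs => ?_)
  · rw [heq₁ hs]; exact (h₁ t hs).congr heq₁ (heq₁ hs)
  · rw [heq₂ hs]; exact (h₂ t hs).congr heq₂ (heq₂ hs)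

end Calculus

section TimeChange

variable {γ γ' : ℝ → ℝ} {τ t₀ c : ℝ}

theorem mul_sub_le_affineExtend_sub (hτ : τ ≤ t₀) (hγ : ∀ t ∈ Icc τ t₀, HasDerivAt γ (γ' t) t)
    (hγ' : ∀ t ∈ Icc τ t₀, c ≤ γ' t) {x y : ℝ} (hxy : x ≤ y) :
    c * (y - x) ≤ affineExtend γ γ' τ t₀ y - affineExtend γ γ' τ t₀ x := by
  have hg := hasDerivAt_affineExtend hτ fun t ht => (hγ t ht).hasDerivWithinAt
  exact mul_sub_le_image_sub_of_le_deriv (fun t => (hg t).differentiableAt)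
    (fun t => (hg t).deriv ▸ hγ' _ (clampIcc_mem hτ t)) hxy

theorem mul_sub_le_sub_of_le_deriv (hτ : τ ≤ t₀) (hγ : ∀ t ∈ Icc τ t₀, HasDerivAt γ (γ' t) t)
    (hγ' : ∀ t ∈ Icc τ t₀, c ≤ γ' t) : c * (t₀ - τ) ≤ γ t₀ - γ τ := by
  simpa only [affineExtend_of_mem (left_mem_Icc.2 hτ), affineExtend_of_mem (right_mem_Icc.2 hτ)]
    using mul_sub_le_affineExtend_sub hτ hγ hγ' hτ

theorem surjective_of_mul_sub_le_sub {g : ℝ → ℝ} (hc : 0 < c) (hg : Continuous g)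
    (hgrowth : ∀ x y, x ≤ y → c * (y - x) ≤ g y - g x) : Function.Surjective g := by
  refine hg.surjective ?_ ?_
  · refine tendsto_atTop_mono' _ ?_ (tendsto_atTop_add_const_left _ (g 0)
      (tendsto_id.const_mul_atTop hc))
    filter_upwards [eventually_ge_atTop 0] with y hy
    show g 0 + c * y ≤ g y
    linarith [hgrowth 0 y hy]
  · refine tendsto_atBot_mono' _ ?_ (tendsto_atBot_add_const_left _ (g 0)
      (tendsto_id.const_mul_atBot hc))
    filter_upwards [eventually_le_atBot 0] with y hy
    show g y ≤ g 0 + c * y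
    linarith [hgrowth y 0 hy]

theorem exists_inverse_of_le_deriv (hτ : τ ≤ t₀) (hc : 0 < c)
    (hγ : ∀ t ∈ Icc τ t₀, HasDerivAt γ (γ' t) t) (hγ' : ∀ t ∈ Icc τ t₀, c ≤ γ' t) :
    ∃ σ : ℝ → ℝ, MapsTo σ (Icc (γ τ) (γ t₀)) (Icc τ t₀) ∧ LeftInvOn γ σ (Icc (γ τ) (γ t₀)) ∧
      σ (γ τ) = τ ∧ σ (γ t₀) = t₀ ∧ ∀ s ∈ Icc (γ τ) (γ t₀), HasDerivAt σ (γ' (σ s))⁻¹ s := by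
  set g := affineExtend γ γ' τ t₀
  have hg : ∀ t, HasDerivAt g (γ' (clampIcc τ t₀ t)) t :=
    hasDerivAt_affineExtend hτ fun t ht => (hγ t ht).hasDerivWithinAt
  have hgrowth : ∀ x y, x ≤ y → c * (y - x) ≤ g y - g x := fun x y =>
    mul_sub_le_affineExtend_sub hτ hγ hγ'
  have hmono : StrictMono g := fun x y hxy => by nlinarith [hgrowth x y hxy.le]
  set e := hmono.orderIsoOfSurjective g <| surjective_of_mul_sub_le_sub hc
    (continuous_iff_continuousAt.2 fun t => (hg t).continuousAt) hgrowth
  have hσγ : ∀ t ∈ Icc τ t₀, e.symm (γ t) = t := fun t ht => by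
    rw [← affineExtend_of_mem (f := γ) (f' := γ') ht]; exact e.symm_apply_apply t
  have hτ₀ : τ ∈ Icc τ t₀ := left_mem_Icc.2 hτ
  have ht₀ : t₀ ∈ Icc τ t₀ := right_mem_Icc.2 hτ
  have hmaps : MapsTo e.symm (Icc (γ τ) (γ t₀)) (Icc τ t₀) := fun s hs => by
    rw [← hσγ τ hτ₀, ← hσγ t₀ ht₀]
    exact ⟨e.symm.monotone hs.1, e.symm.monotone hs.2⟩
  have hinv : LeftInvOn γ e.symm (Icc (γ τ) (γ t₀)) := fun s hs => by
    rw [← affineExtend_of_mem (f := γ) (f' := γ') (hmaps hs)]; exact e.apply_symm_apply s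
  refine ⟨e.symm, hmaps, hinv, hσγ τ hτ₀, hσγ t₀ ht₀, fun s hs => ?_⟩
  have hderiv := hg (e.symm s)
  rw [clampIcc_of_mem (hmaps hs)] at hderiv
  exact hderiv.of_local_left_inverse e.symm.continuous.continuousAt
    (by linarith [hγ' _ (hmaps hs)]) (Eventually.of_forall e.apply_symm_apply)

end TimeChange

section LinearODE

variable {E : Type*} [NormedAddCommGroup E] [NormedSpace ℝ E] [CompleteSpace E]
  {A : ℝ → E →L[ℝ] E} {M : ℝ≥0}

theorem exists_pos_forall_exists_isIntegralCurveOn_Icc (hA : ∀ t, ‖A t‖ ≤ M)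
    (hcont : ∀ x, Continuous fun t => A t x) :
    ∃ δ > 0, ∀ t₀ x₀, ∃ α : ℝ → E, α t₀ = x₀ ∧
      IsIntegralCurveOn α (fun t x => A t x) (Icc t₀ (t₀ + δ)) := by
  set δ : ℝ := (2 * ((M : ℝ) + 1))⁻¹
  have hδ : 0 < δ := by positivity
  refine ⟨δ, hδ, fun t₀ x₀ => ?_⟩
  have hpl : IsPicardLindelof (fun t x => A t x) (⟨t₀, le_rfl, by linarith⟩ : Icc t₀ (t₀ + δ)) x₀
      (‖x₀‖₊ + 1) 0 (M * (2 * ‖x₀‖₊ + 1)) M := by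
    refine ⟨fun t _ => ((A t).lipschitz.weaken (hA t)).lipschitzOnWith,
      fun x _ => (hcont x).continuousOn, fun t _ x hx => ?_, ?_⟩
    · have hx : ‖x‖ ≤ 2 * ‖x₀‖ + 1 := by
        have := norm_le_norm_add_norm_sub' x x₀
        have := mem_closedBall_iff_norm.1 hx
        push_cast at this
        linarith
      push_cast
      exact (A t).le_of_opNorm_le (hA t) x |>.trans (by gcongr)
    · have hM : (M : ℝ) * (2 * ‖x₀‖ + 1) * δ ≤ ‖x₀‖ + 1 := by
        rw [← div_eq_mul_inv, div_le_iff₀ (by positivity)]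
        nlinarith [norm_nonneg x₀, M.coe_nonneg]
      simpa [max_eq_left hδ.le] using hM
  exact hpl.exists_eq_forall_mem_Icc_hasDerivWithinAt₀

theorem exists_isIntegralCurveOn_Icc (hA : ∀ t, ‖A t‖ ≤ M)
    (hcont : ∀ x, Continuous fun t => A t x) (t₀ T : ℝ) (x₀ : E) :
    ∃ α : ℝ → E, α t₀ = x₀ ∧ IsIntegralCurveOn α (fun t x => A t x) (Icc t₀ T) := by
  obtain ⟨δ, hδ, hstep⟩ := exists_pos_forall_exists_isIntegralCurveOn_Icc hA hcont
  have hiter : ∀ n : ℕ, ∀ t₀ x₀, ∃ α : ℝ → E, α t₀ = x₀ ∧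
      IsIntegralCurveOn α (fun t x => A t x) (Icc t₀ (t₀ + (n + 1) * δ)) := by
    intro n
    induction n with
    | zero => simpa using hstep
    | succ n ih =>
      intro t₀ x₀
      obtain ⟨α₁, h₁0, h₁⟩ := hstep t₀ x₀
      obtain ⟨α₂, h₂0, h₂⟩ := ih (t₀ + δ) (α₁ (t₀ + δ))
      refine ⟨_, by simp [hδ.le, h₁0], h₁.piecewise_Icc (b := t₀ + δ) (by linarith) ?_ ?_ h₂0.symm⟩
      · nlinarith
      · convert h₂ using 2; push_cast; ring
  obtain ⟨n, hn⟩ := exists_nat_ge ((T - t₀) / δ)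
  obtain ⟨α, hα0, hα⟩ := hiter n t₀ x₀
  have hsub : Icc t₀ T ⊆ Icc t₀ (t₀ + (n + 1) * δ) := by
    refine Icc_subset_Icc_right ?_
    rw [div_le_iff₀ hδ] at hn
    linarith
  exact ⟨α, hα0, fun t ht => (hα t (hsub ht)).mono hsub⟩

theorem exists_isIntegralCurveOn_Ici (hA : ∀ t, ‖A t‖ ≤ M)
    (hcont : ∀ x, Continuous fun t => A t x) (t₀ : ℝ) (x₀ : E) :
    ∃ α : ℝ → E, α t₀ = x₀ ∧ IsIntegralCurveOn α (fun t x => A t x) (Ici t₀) := by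
  choose α hα0 hα using fun T => exists_isIntegralCurveOn_Icc hA hcont t₀ T x₀
  have hright : ∀ T, ∀ t ∈ Ico t₀ T, HasDerivWithinAt (α T) (A t (α T t)) (Ici t) t :=
    fun T t ht => (hα T t (Ico_subset_Icc_self ht)).mono_of_mem_nhdsWithin
      (Icc_mem_nhdsGE_of_mem ht)
  have hagree : ∀ T T', EqOn (α T) (α T') (Icc t₀ (min T T')) := fun T T' =>
    ODE_solution_unique (fun t => (A t).lipschitz.weaken (hA t))
      ((hα T).continuousOn.mono (Icc_subset_Icc_right (min_le_left _ _)))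
      (fun t ht => hright T t ⟨ht.1, ht.2.trans_le (min_le_left _ _)⟩)
      ((hα T').continuousOn.mono (Icc_subset_Icc_right (min_le_right _ _)))
      (fun t ht => hright T' t ⟨ht.1, ht.2.trans_le (min_le_right _ _)⟩)
      ((hα0 T).trans (hα0 T').symm)
  refine ⟨fun t => α (t + 1) t, hα0 _, fun t ht => ?_⟩
  have hnhds : Icc t₀ (t + 1) ∈ 𝓝[Ici t₀] t := by
    rw [← Ici_inter_Iic]
    exact inter_mem_nhdsWithin _ (Iic_mem_nhds (by linarith))
  refine ((hα (t + 1) t ⟨ht, by linarith⟩).mono_of_mem_nhdsWithin hnhds).congr_of_eventuallyEq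
    ?_ rfl
  filter_upwards [hnhds] with s hs
  exact hagree (s + 1) (t + 1) ⟨hs.1, le_min (by linarith) hs.2⟩

end LinearODE

section lpOperators

variable {α β E F : Type*} [NormedAddCommGroup E] [NormedAddCommGroup F]

theorem _root_.lp.norm_le_mul_of_forall_norm_le [NormedSpace ℝ E] {x : ℓ²(α, E)} {y : ℓ²(α, F)}
    {B : ℝ} (hB : 0 ≤ B) (h : ∀ i, ‖y i‖ ≤ B * ‖x i‖) : ‖y‖ ≤ B * ‖x‖ := by
  calc ‖y‖ ≤ ‖B • x‖ := lp.norm_mono two_ne_zero fun i => by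
          simpa [norm_smul, abs_of_nonneg hB] using h i
    _ = B * ‖x‖ := by rw [lp.norm_const_smul two_ne_zero, Real.norm_of_nonneg hB]

theorem _root_.Memℓp.comp_equiv_two {f : α → E} (hf : Memℓp f 2) (e : β ≃ α) : Memℓp (f ∘ e) 2 := by
  rw [memℓp_gen_iff (by norm_num)] at hf ⊢
  exact e.summable_iff.2 hf

variable [NormedSpace ℝ E] [NormedSpace ℝ F]

def lpCompEquiv (e : β ≃ α) : ℓ²(α, E) →L[ℝ] ℓ²(β, E) :=
  LinearMap.mkContinuous
    { toFun := fun x => ⟨x ∘ e, (lp.memℓp x).comp_equiv_two e⟩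
      map_add' := fun _ _ => rfl
      map_smul' := fun _ _ => rfl } 1
    fun x => by
      change ‖(⟨x ∘ e, (lp.memℓp x).comp_equiv_two e⟩ : ℓ²(β, E))‖ ≤ 1 * ‖x‖
      rw [one_mul, lp.norm_eq_tsum_rpow (by norm_num), lp.norm_eq_tsum_rpow (by norm_num)]
      exact (congrArg (· ^ _) (e.tsum_eq fun i => ‖x i‖ ^ (2 : ℝ≥0∞).toReal)).le

@[simp]
theorem lpCompEquiv_apply (e : β ≃ α) (x : ℓ²(α, E)) (i : β) : lpCompEquiv e x i = x (e i) := rfl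

theorem norm_lpCompEquiv_le (e : β ≃ α) : ‖(lpCompEquiv e : ℓ²(α, E) →L[ℝ] ℓ²(β, E))‖ ≤ 1 :=
  LinearMap.mkContinuous_norm_le _ zero_le_one _

theorem norm_lpCompEquiv_apply_le (e : β ≃ α) (x : ℓ²(α, E)) : ‖lpCompEquiv e x‖ ≤ ‖x‖ :=
  ((lpCompEquiv (E := E) e).le_of_opNorm_le (norm_lpCompEquiv_le e) x).trans_eq (one_mul _)

theorem memℓp_two_pointwise {L : α → E →L[ℝ] F} (hL : BddAbove (range fun i => ‖L i‖))
    (x : ℓ²(α, E)) : Memℓp (fun i => L i (x i)) 2 := by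
  obtain ⟨B, hB⟩ := hL
  refine ((lp.memℓp x).norm.const_mul B).mono fun i => ?_
  exact (L i).le_opNorm (x i) |>.trans (by gcongr; exact hB (mem_range_self i))

def lpPointwise (L : α → E →L[ℝ] F) (hL : BddAbove (range fun i => ‖L i‖)) :
    ℓ²(α, E) →L[ℝ] ℓ²(α, F) :=
  LinearMap.mkContinuousOfExistsBound
    { toFun := fun x => ⟨fun i => L i (x i), memℓp_two_pointwise hL x⟩
      map_add' := fun x y => by ext i; simp only [lp.coeFn_add, Pi.add_apply, map_add]
      map_smul' := fun c x => by ext i; simp only [lp.coeFn_smul, Pi.smul_apply, map_smul]; rfl }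
    (by
      obtain ⟨B, hB⟩ := hL
      refine ⟨max B 0, fun x => lp.norm_le_mul_of_forall_norm_le (le_max_right _ _) fun i => ?_⟩
      exact (L i).le_opNorm (x i) |>.trans
        (by gcongr; exact (hB (mem_range_self i)).trans (le_max_left _ _)))

@[simp]
theorem lpPointwise_apply (L : α → E →L[ℝ] F) (hL : BddAbove (range fun i => ‖L i‖))
    (x : ℓ²(α, E)) (i : α) : lpPointwise L hL x i = L i (x i) := rfl

theorem norm_lpPointwise_sub_apply_le {L L' : α → E →L[ℝ] F}
    (hL : BddAbove (range fun i => ‖L i‖)) (hL' : BddAbove (range fun i => ‖L' i‖)) {B : ℝ}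
    (hB0 : 0 ≤ B) (hB : ∀ i, ‖L i - L' i‖ ≤ B) (x : ℓ²(α, E)) :
    ‖lpPointwise L hL x - lpPointwise L' hL' x‖ ≤ B * ‖x‖ :=
  lp.norm_le_mul_of_forall_norm_le hB0 fun i => by
    simpa using (L i - L' i).le_opNorm (x i) |>.trans (by gcongr; exact hB i)

theorem norm_lpPointwise_le {L : α → E →L[ℝ] F} (hL : BddAbove (range fun i => ‖L i‖)) {B : ℝ}
    (hB0 : 0 ≤ B) (hB : ∀ i, ‖L i‖ ≤ B) : ‖lpPointwise L hL‖ ≤ B :=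
  ContinuousLinearMap.opNorm_le_bound _ hB0 fun x =>
    lp.norm_le_mul_of_forall_norm_le hB0 fun i =>
      (L i).le_opNorm (x i) |>.trans (by gcongr; exact hB i)

end lpOperators

section Weights

theorem sq_norm_le_nsq (w : ℝ × ℝ) : ‖w‖ ^ 2 ≤ nsq w := by
  rw [Prod.norm_def, Real.norm_eq_abs, Real.norm_eq_abs, nsq]
  rcases max_cases |w.1| |w.2| with ⟨h, _⟩ | ⟨h, _⟩ <;> rw [h, sq_abs] <;>
    nlinarith [sq_nonneg w.1, sq_nonneg w.2]

theorem nsq_le_two_mul_sq_norm (w : ℝ × ℝ) : nsq w ≤ 2 * ‖w‖ ^ 2 := by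
  rw [Prod.norm_def, Real.norm_eq_abs, Real.norm_eq_abs, nsq, two_mul, ← sq_abs w.1, ← sq_abs w.2]
  gcongr
  exacts [le_max_left _ _, le_max_right _ _]

def expWeight (a : ℝ) (u : ℤ → ℝ × ℝ) (n : ℤ) : ℝ × ℝ := Real.exp (a * n) • u n

theorem expWeight_expWeight (a b : ℝ) (u : ℤ → ℝ × ℝ) :
    expWeight a (expWeight b u) = expWeight (a + b) u := by
  ext n <;> simp [expWeight, smul_smul, ← Real.exp_add, add_mul]

theorem expWeight_zero (u : ℤ → ℝ × ℝ) : expWeight 0 u = u := by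
  ext n <;> simp [expWeight]

theorem meml2w_iff_memℓp (a : ℝ) (u : ℤ → ℝ × ℝ) : Meml2w a u ↔ Memℓp (expWeight a u) 2 := by
  have hsq : ∀ n : ℤ, ‖expWeight a u n‖ ^ 2 = Real.exp (2 * a * n) * ‖u n‖ ^ 2 := fun n => by
    rw [expWeight, norm_smul, mul_pow, Real.norm_of_nonneg (Real.exp_nonneg _), ← Real.exp_nat_mul]
    ring_nf
  rw [memℓp_gen_iff (by norm_num), Meml2w]
  simp only [ENNReal.toReal_ofNat, Real.rpow_two, hsq]
  constructor <;> intro h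
  · refine h.of_nonneg_of_le (fun n => by positivity) fun n => ?_
    exact mul_le_mul_of_nonneg_left (sq_norm_le_nsq _) (Real.exp_nonneg _)
  · refine (h.mul_left 2).of_nonneg_of_le
      (fun n => mul_nonneg (Real.exp_nonneg _) ((sq_nonneg _).trans (sq_norm_le_nsq _)))
      fun n => ?_
    calc Real.exp (2 * a * n) * nsq (u n) ≤ Real.exp (2 * a * n) * (2 * ‖u n‖ ^ 2) :=
          mul_le_mul_of_nonneg_left (nsq_le_two_mul_sq_norm _) (Real.exp_nonneg _)
      _ = 2 * (Real.exp (2 * a * n) * ‖u n‖ ^ 2) := by ring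

end Weights

section Soliton

theorem lipschitzWith_inv_cosh_sq : LipschitzWith 2 fun y => (cosh y ^ 2)⁻¹ := by
  have hderiv : ∀ y, HasDerivAt (fun y => (cosh y ^ 2)⁻¹)
      (-(2 * cosh y * sinh y) / (cosh y ^ 2) ^ 2) y := fun y => by
    simpa using ((hasDerivAt_cosh y).fun_pow 2).fun_inv (pow_pos (cosh_pos y) 2).ne'
  refine lipschitzWith_of_nnnorm_deriv_le (fun y => (hderiv y).differentiableAt) fun y => ?_
  have hc := one_le_cosh y
  have hs : |sinh y| ≤ cosh y := by
    rw [abs_le]; constructor <;> nlinarith [cosh_sq y, cosh_pos y]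
  rw [(hderiv y).deriv, ← NNReal.coe_le_coe, coe_nnnorm, Real.norm_eq_abs, abs_div, abs_neg,
    abs_of_pos (by positivity : (0 : ℝ) < (cosh y ^ 2) ^ 2), div_le_iff₀ (by positivity),
    abs_mul, abs_of_pos (by positivity : (0 : ℝ) < 2 * cosh y)]
  calc 2 * cosh y * |sinh y| ≤ 2 * cosh y * cosh y := by gcongr
    _ ≤ 2 * (cosh y ^ 2) ^ 2 := by nlinarith [one_le_pow₀ (n := 2) hc]
    _ = _ := by norm_num

theorem exp_neg_rtil (c x : ℝ) :
    Real.exp (-(rtil c x)) = 1 + sinh (kappa c) ^ 2 * (cosh (kappa c * x) ^ 2)⁻¹ := by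
  set κ := kappa c
  have hexp : ∀ y, Real.exp (qt c y) = cosh (κ * (y - 1)) / cosh (κ * y) := fun y =>
    Real.exp_log (div_pos (cosh_pos _) (cosh_pos _))
  have hprod : cosh (κ * (x - 1)) * cosh (κ * (x + 1)) = cosh (κ * x) ^ 2 + sinh κ ^ 2 := by
    rw [mul_sub, mul_add, mul_one, cosh_sub, cosh_add]
    linear_combination cosh (κ * x) ^ 2 * cosh_sq κ + sinh κ ^ 2 * cosh_sq (κ * x)
  rw [rtil, neg_sub, Real.exp_sub, hexp, hexp, add_sub_cancel_right]
  have := cosh_pos (κ * x)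
  field_simp
  linear_combination hprod

def solitonCoeff (c s x : ℝ) : ℝ := Real.exp (-(rtil c (x - c * s)))

theorem abs_solitonCoeff_le (c s x : ℝ) : |solitonCoeff c s x| ≤ 1 + sinh (kappa c) ^ 2 := by
  rw [solitonCoeff, exp_neg_rtil, abs_of_pos (by positivity)]
  gcongr 1 + ?_
  exact mul_le_of_le_one_right (sq_nonneg _) (inv_le_one_of_one_le₀ (one_le_pow₀ (one_le_cosh _)))

theorem abs_solitonCoeff_sub_le (c s s' x : ℝ) :
    |solitonCoeff c s x - solitonCoeff c s' x| ≤
      2 * sinh (kappa c) ^ 2 * |kappa c * c| * |s - s'| := by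
  have h := lipschitzWith_inv_cosh_sq.dist_le_mul (kappa c * (x - c * s)) (kappa c * (x - c * s'))
  rw [Real.dist_eq, Real.dist_eq] at h
  rw [solitonCoeff, solitonCoeff, exp_neg_rtil, exp_neg_rtil, add_sub_add_left_eq_sub, ← mul_sub,
    abs_mul, abs_of_nonneg (sq_nonneg _)]
  calc sinh (kappa c) ^ 2 * |_ - _|
      ≤ sinh (kappa c) ^ 2 * (2 * |kappa c * (x - c * s) - kappa c * (x - c * s')|) := by
        gcongr; exact_mod_cast h
    _ = _ := by
      rw [show kappa c * (x - c * s) - kappa c * (x - c * s') = kappa c * c * (s' - s) by ring,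
        abs_mul, abs_sub_comm]
      ring

end Soliton

section LinearizedToda

def linTodaRHS (k : ℝ → ℝ) (u : ℤ → ℝ × ℝ) (n : ℤ) : ℝ × ℝ :=
  ((u (n + 1)).2 - (u n).2, k n * (u n).1 - k ((n : ℝ) - 1) * (u (n - 1)).1)

def upperRight (r : ℝ) : ℝ × ℝ →L[ℝ] ℝ × ℝ := (r • ContinuousLinearMap.snd ℝ ℝ ℝ).prod 0

def lowerLeft (r : ℝ) : ℝ × ℝ →L[ℝ] ℝ × ℝ :=
  (0 : ℝ × ℝ →L[ℝ] ℝ).prod (r • ContinuousLinearMap.fst ℝ ℝ ℝ)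

@[simp]
theorem upperRight_apply (r : ℝ) (w : ℝ × ℝ) : upperRight r w = (r * w.2, 0) := rfl

@[simp]
theorem lowerLeft_apply (r : ℝ) (w : ℝ × ℝ) : lowerLeft r w = (0, r * w.1) := rfl

theorem norm_upperRight_le (r : ℝ) : ‖upperRight r‖ ≤ |r| :=
  ContinuousLinearMap.opNorm_le_bound _ (abs_nonneg r) fun w => by
    rw [upperRight_apply, Prod.norm_def, norm_zero, max_eq_left (norm_nonneg _), norm_mul,
      Real.norm_eq_abs]
    gcongr
    exact norm_snd_le w

theorem norm_lowerLeft_le (r : ℝ) : ‖lowerLeft r‖ ≤ |r| :=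
  ContinuousLinearMap.opNorm_le_bound _ (abs_nonneg r) fun w => by
    rw [lowerLeft_apply, Prod.norm_def, norm_zero, max_eq_right (norm_nonneg _), norm_mul,
      Real.norm_eq_abs]
    gcongr
    exact norm_fst_le w

theorem lowerLeft_sub (r r' : ℝ) : lowerLeft r - lowerLeft r' = lowerLeft (r - r') := by
  ext <;> simp

def todaDiag (k : ℝ → ℝ) (n : ℤ) : ℝ × ℝ →L[ℝ] ℝ × ℝ := upperRight (-1) + lowerLeft (k n)

def todaBelow (a : ℝ) (k : ℝ → ℝ) (n : ℤ) : ℝ × ℝ →L[ℝ] ℝ × ℝ :=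
  lowerLeft (-(Real.exp a * k ((n : ℝ) - 1)))

theorem norm_todaDiag_le (k : ℝ → ℝ) (n : ℤ) : ‖todaDiag k n‖ ≤ 1 + |k n| :=
  (norm_add_le _ _).trans <|
    add_le_add ((norm_upperRight_le _).trans (by simp)) (norm_lowerLeft_le _)

theorem norm_todaBelow_le (a : ℝ) (k : ℝ → ℝ) (n : ℤ) :
    ‖todaBelow a k n‖ ≤ Real.exp a * |k ((n : ℝ) - 1)| :=
  (norm_lowerLeft_le _).trans (by rw [abs_neg, abs_mul, abs_of_pos (Real.exp_pos a)])

theorem bddAbove_norm_todaDiag {k : ℝ → ℝ} {B : ℝ} (hk : ∀ x, |k x| ≤ B) :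
    BddAbove (range fun n => ‖todaDiag k n‖) :=
  ⟨1 + B, forall_mem_range.2 fun n => (norm_todaDiag_le k n).trans (by linarith [hk (n : ℝ)])⟩

theorem bddAbove_norm_todaBelow (a : ℝ) {k : ℝ → ℝ} {B : ℝ} (hk : ∀ x, |k x| ≤ B) :
    BddAbove (range fun n => ‖todaBelow a k n‖) :=
  ⟨Real.exp a * B, forall_mem_range.2 fun n =>
    (norm_todaBelow_le a k n).trans (mul_le_mul_of_nonneg_left (hk _) (Real.exp_nonneg a))⟩

/-- The linearized Toda field conjugated by `expWeight a`, i.e. acting on `n ↦ e^{an} u n`. -/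
def todaOp (a B : ℝ) (k : ℝ → ℝ) (hk : ∀ x, |k x| ≤ B) :
    ℓ²(ℤ, ℝ × ℝ) →L[ℝ] ℓ²(ℤ, ℝ × ℝ) :=
  (lpPointwise (fun _ : ℤ => upperRight (Real.exp (-a)))
      ⟨_, forall_mem_range.2 fun _ : ℤ => le_rfl⟩).comp
      (lpCompEquiv (Equiv.addRight 1)) +
    lpPointwise (todaDiag k) (bddAbove_norm_todaDiag hk) +
    (lpPointwise (todaBelow a k) (bddAbove_norm_todaBelow a hk)).comp
      (lpCompEquiv (Equiv.subRight 1))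

theorem todaOp_apply_eq_add (a B : ℝ) (k : ℝ → ℝ) (hk : ∀ x, |k x| ≤ B) (g : ℓ²(ℤ, ℝ × ℝ)) :
    todaOp a B k hk g =
      lpPointwise (fun _ : ℤ => upperRight (Real.exp (-a)))
          ⟨_, forall_mem_range.2 fun _ : ℤ => le_rfl⟩
          (lpCompEquiv (Equiv.addRight 1) g) +
        lpPointwise (todaDiag k) (bddAbove_norm_todaDiag hk) g +
        lpPointwise (todaBelow a k) (bddAbove_norm_todaBelow a hk)
          (lpCompEquiv (Equiv.subRight 1) g) :=
  rfl

theorem todaOp_apply (a B : ℝ) (k : ℝ → ℝ) (hk : ∀ x, |k x| ≤ B) (g : ℓ²(ℤ, ℝ × ℝ)) (n : ℤ) :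
    todaOp a B k hk g n = (Real.exp (-a) * (g (n + 1)).2 - (g n).2,
      k n * (g n).1 - Real.exp a * k ((n : ℝ) - 1) * (g (n - 1)).1) := by
  ext
  · show Real.exp (-a) * (g (n + 1)).2 + (-1 * (g n).2 + 0) + 0 = _
    ring
  · show 0 + (0 + k n * (g n).1) + -(Real.exp a * k ((n : ℝ) - 1)) * (g (n - 1)).1 = _
    ring

theorem expWeight_neg_todaOp (a B : ℝ) (k : ℝ → ℝ) (hk : ∀ x, |k x| ≤ B) (g : ℓ²(ℤ, ℝ × ℝ)) :
    expWeight (-a) (todaOp a B k hk g) = linTodaRHS k (expWeight (-a) g) := by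
  ext n
  · have h : Real.exp (-a * ((n : ℝ) + 1)) = Real.exp (-a * n) * Real.exp (-a) := by
      rw [← Real.exp_add]; ring_nf
    simp only [expWeight, todaOp_apply, linTodaRHS, Prod.smul_fst, Prod.smul_snd, smul_eq_mul,
      Int.cast_add, Int.cast_one, h]
    ring
  · have h : Real.exp (-a * ((n : ℝ) - 1)) = Real.exp (-a * n) * Real.exp a := by
      rw [← Real.exp_add]; ring_nf
    simp only [expWeight, todaOp_apply, linTodaRHS, Prod.smul_fst, Prod.smul_snd, smul_eq_mul,
      Int.cast_sub, Int.cast_one, h]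
    ring

theorem norm_todaOp_le (a B : ℝ) (k : ℝ → ℝ) (hk : ∀ x, |k x| ≤ B) :
    ‖todaOp a B k hk‖ ≤ Real.exp (-a) + (1 + B) + Real.exp a * B := by
  have hB : 0 ≤ B := (abs_nonneg _).trans (hk 0)
  refine (norm_add_le _ _).trans (add_le_add ((norm_add_le _ _).trans (add_le_add ?_ ?_)) ?_)
  · refine (ContinuousLinearMap.opNorm_comp_le _ _).trans <|
      (mul_le_of_le_one_right (norm_nonneg _) (norm_lpCompEquiv_le _)).trans ?_
    refine norm_lpPointwise_le _ (Real.exp_nonneg _) fun _ => ?_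
    exact (norm_upperRight_le _).trans (abs_of_pos (Real.exp_pos _)).le
  · exact norm_lpPointwise_le _ (by positivity) fun n =>
      (norm_todaDiag_le k n).trans (by linarith [hk (n : ℝ)])
  · refine (ContinuousLinearMap.opNorm_comp_le _ _).trans <|
      (mul_le_of_le_one_right (norm_nonneg _) (norm_lpCompEquiv_le _)).trans ?_
    exact norm_lpPointwise_le _ (by positivity) fun n =>
      (norm_todaBelow_le a k n).trans (mul_le_mul_of_nonneg_left (hk _) (Real.exp_nonneg a))

theorem norm_todaOp_sub_todaOp_apply_le (a B : ℝ) {k k' : ℝ → ℝ} (hk : ∀ x, |k x| ≤ B)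
    (hk' : ∀ x, |k' x| ≤ B) {D : ℝ} (hD : ∀ x, |k x - k' x| ≤ D) (g : ℓ²(ℤ, ℝ × ℝ)) :
    ‖todaOp a B k hk g - todaOp a B k' hk' g‖ ≤ (1 + Real.exp a) * D * ‖g‖ := by
  have hD0 : 0 ≤ D := (abs_nonneg _).trans (hD 0)
  have hsplit : todaOp a B k hk g - todaOp a B k' hk' g =
      (lpPointwise (todaDiag k) (bddAbove_norm_todaDiag hk) g -
        lpPointwise (todaDiag k') (bddAbove_norm_todaDiag hk') g) +
      (lpPointwise (todaBelow a k) (bddAbove_norm_todaBelow a hk)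
          (lpCompEquiv (Equiv.subRight 1) g) -
        lpPointwise (todaBelow a k') (bddAbove_norm_todaBelow a hk')
          (lpCompEquiv (Equiv.subRight 1) g)) := by
    have {G : Type} [AddCommGroup G] (x y y' z z' : G) :
        x + y + z - (x + y' + z') = (y - y') + (z - z') := by abel
    rw [todaOp_apply_eq_add, todaOp_apply_eq_add, this]
  rw [hsplit]
  refine (norm_add_le _ _).trans ?_
  have h₁ := norm_lpPointwise_sub_apply_le (bddAbove_norm_todaDiag hk) (bddAbove_norm_todaDiag hk')
    hD0 (fun n => by
      rw [todaDiag, todaDiag, add_sub_add_left_eq_sub, lowerLeft_sub]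
      exact (norm_lowerLeft_le _).trans (hD _)) g
  have h₂ := norm_lpPointwise_sub_apply_le (bddAbove_norm_todaBelow a hk)
    (bddAbove_norm_todaBelow a hk') (mul_nonneg (Real.exp_nonneg a) hD0) (fun n => by
      rw [todaBelow, todaBelow, lowerLeft_sub, ← neg_sub', ← mul_sub]
      refine (norm_lowerLeft_le _).trans ?_
      rw [abs_neg, abs_mul, abs_of_pos (Real.exp_pos a)]
      exact mul_le_mul_of_nonneg_left (hD _) (Real.exp_nonneg a)) (lpCompEquiv (Equiv.subRight 1) g)
  have h₃ := norm_lpCompEquiv_apply_le (Equiv.subRight (1 : ℤ)) g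
  nlinarith [mul_le_mul_of_nonneg_left h₃ (mul_nonneg (Real.exp_nonneg a) hD0), norm_nonneg g]

end LinearizedToda

section Existence

theorem exists_linToda_solution_Ici {κ : ℝ → ℝ → ℝ} {B L : ℝ} (hB : ∀ s x, |κ s x| ≤ B)
    (hL : ∀ s s' x, |κ s x - κ s' x| ≤ L * |s - s'|) (a s₁ : ℝ) {φ : ℤ → ℝ × ℝ}
    (hφ : Meml2w a φ) :
    ∃ w : ℝ → ℤ → ℝ × ℝ, w s₁ = φ ∧ (∀ s, Meml2w a (w s)) ∧ ∀ s, s₁ ≤ s → ∀ n,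
      HasDerivWithinAt (fun t => w t n) (linTodaRHS (κ s) (w s) n) (Ici s₁) s := by
  set A : ℝ → ℓ²(ℤ, ℝ × ℝ) →L[ℝ] ℓ²(ℤ, ℝ × ℝ) := fun s => todaOp a B (κ s) (hB s)
  have hL0 : 0 ≤ L := by simpa using (abs_nonneg _).trans (hL 1 0 0)
  have hbound : ∀ s, ‖A s‖ ≤ Real.toNNReal (Real.exp (-a) + (1 + B) + Real.exp a * B) :=
    fun s => (norm_todaOp_le a B (κ s) (hB s)).trans (Real.le_coe_toNNReal _)
  have hcont : ∀ g, Continuous fun s => A s g := fun g =>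
    (LipschitzWith.of_dist_le_mul (K := Real.toNNReal ((1 + Real.exp a) * L * ‖g‖)) fun s s' => by
      rw [dist_eq_norm, Real.dist_eq, Real.coe_toNNReal _ (by positivity)]
      refine (norm_todaOp_sub_todaOp_apply_le a B (hB s) (hB s') (fun x => hL s s' x) g).trans ?_
      linarith [show (1 + Real.exp a) * (L * |s - s'|) * ‖g‖ = (1 + Real.exp a) * L * ‖g‖ * |s - s'|
        by ring]).continuous
  obtain ⟨g, hg₁, hg⟩ := exists_isIntegralCurveOn_Ici hbound hcont s₁
    ⟨expWeight a φ, (meml2w_iff_memℓp a φ).1 hφ⟩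
  refine ⟨fun s => expWeight (-a) (g s), ?_, fun s => ?_, fun s hs n => ?_⟩
  · beta_reduce
    rw [hg₁]
    show expWeight (-a) (expWeight a φ) = φ
    rw [expWeight_expWeight, neg_add_cancel, expWeight_zero]
  · rw [meml2w_iff_memℓp, expWeight_expWeight, add_neg_cancel, expWeight_zero]
    exact lp.memℓp _
  · have h := ((lp.evalCLM ℝ (fun _ : ℤ => ℝ × ℝ) 2 n).hasFDerivAt.comp_hasDerivWithinAt s
      (hg s hs)).const_smul (Real.exp (-a * n))
    rw [← expWeight_neg_todaOp a B (κ s) (hB s)]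
    exact h

end Existence

section Glue

theorem exists_isLinTodaSol_of_modulated {c₀ a c τ t₀ : ℝ} {γ γ' : ℝ → ℝ}
    {v : ℝ → ℤ → ℝ × ℝ} (hτt₀ : τ ≤ t₀) (hc : 0 < c) (hγ : ∀ t ∈ Icc τ t₀, HasDerivAt γ (γ' t) t)
    (hγ' : ∀ t ∈ Icc τ t₀, c ≤ γ' t)
    (hv : ∀ t ∈ Icc τ t₀, ∀ n, HasDerivAt (fun s => v s n)
      (γ' t • linTodaRHS (solitonCoeff c₀ (γ t)) (v t) n) t)
    (hmem : ∀ t ∈ Icc τ t₀, Meml2w a (v t)) :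
    ∃ w : ℝ → ℤ → ℝ × ℝ, IsLinTodaSol c₀ (γ τ) w ∧ (∀ s, γ τ ≤ s → Meml2w a (w s)) ∧
      w (γ τ) = v τ ∧ w (γ t₀) = v t₀ := by
  obtain ⟨σ, hσmaps, hσinv, hστ, hσt₀, hσ⟩ := exists_inverse_of_le_deriv hτt₀ hc hγ hγ'
  have hγle : γ τ ≤ γ t₀ := by
    nlinarith [mul_sub_le_sub_of_le_deriv hτt₀ hγ hγ', mul_nonneg hc.le (sub_nonneg.2 hτt₀)]
  obtain ⟨β, hβ₁, hβmem, hβ⟩ := exists_linToda_solution_Ici (abs_solitonCoeff_le c₀)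
    (abs_solitonCoeff_sub_le c₀) a (γ t₀) (hmem t₀ (right_mem_Icc.2 hτt₀))
  have hvσ : ∀ s ∈ Icc (γ τ) (γ t₀), ∀ n, HasDerivAt (fun r => v (σ r) n)
      (linTodaRHS (solitonCoeff c₀ s) (v (σ s)) n) s := fun s hs n => by
    have hpos : γ' (σ s) ≠ 0 := by linarith [hγ' _ (hσmaps hs)]
    have h := (hv _ (hσmaps hs) n).scomp s (hσ s hs)
    rwa [smul_smul, inv_mul_cancel₀ hpos, one_smul, hσinv hs] at h
  set w : ℝ → ℤ → ℝ × ℝ := fun s => if s ≤ γ t₀ then v (σ s) else β s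
  have hwl : EqOn w (v ∘ σ) (Iic (γ t₀)) := fun s hs => if_pos hs
  have hwr : EqOn w β (Ici (γ t₀)) := fun s hs => by
    rcases (mem_Ici.1 hs).eq_or_lt with rfl | h
    · simp [w, hσt₀, hβ₁]
    · exact if_neg (not_le.2 h)
  refine ⟨w, fun s hs n => ?_, fun s hs => ?_, by simp [w, hγle, hστ], by simp [w, hσt₀]⟩
  · have hd : HasDerivAt (fun r => w r n) (linTodaRHS (solitonCoeff c₀ s) (w s) n) s := by
      refine HasDerivAt.of_hasDerivWithinAt_Iic_Ici (a := γ t₀) (fun hs₁ => ?_) (fun hs₁ => ?_)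
      · rw [hwl hs₁]
        exact (hvσ s ⟨hs, hs₁⟩ n).hasDerivWithinAt.congr (fun r hr => by rw [hwl hr]; rfl)
          (by rw [hwl hs₁]; rfl)
      · rw [hwr hs₁]
        exact (hβ s hs₁ n).congr (fun r hr => by rw [hwr hr]) (by rw [hwr hs₁])
    exact ⟨hd.fst, hd.snd⟩
  · by_cases h : s ≤ γ t₀
    · rw [hwl h]; exact hmem _ (hσmaps ⟨hs, h⟩)
    · rw [hwr (le_of_not_ge h)]; exact hβmem s

end Glue

theorem modulated_linearized_decay_general (c₀ a b K : ℝ)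
    (hb : 0 < b)
    (hK : 0 < K) (hKest : LinDecayEst c₀ a b K)
    (T : EReal)
    (γ γ' : ℝ → ℝ)
    (hγ : ∀ t : ℝ, 0 ≤ t → (t : EReal) ≤ T → HasDerivAt γ (γ' t) t)
    (hγ' : ∀ t : ℝ, 0 ≤ t → (t : EReal) ≤ T → 1 / 2 ≤ γ' t)
    (τ : ℝ) (hτ : 0 ≤ τ)
    (φ : ℤ → ℝ × ℝ)
    (horth1 : pairing φ (Jinv (ucDot c₀ (γ τ))) = 0)
    (horth2 : pairing φ (Jinv (ucDc c₀ (γ τ))) = 0)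
    (v : ℝ → ℤ → ℝ × ℝ)
    (hode : ∀ t : ℝ, τ ≤ t → (t : EReal) ≤ T → ∀ n : ℤ,
      HasDerivAt (fun s => (v s n).1) (γ' t * ((v t (n + 1)).2 - (v t n).2)) t ∧
      HasDerivAt (fun s => (v s n).2)
        (γ' t * (Real.exp (-(rtil c₀ ((n : ℝ) - c₀ * γ t))) * (v t n).1
          - Real.exp (-(rtil c₀ ((n : ℝ) - 1 - c₀ * γ t))) * (v t (n - 1)).1)) t)
    (hmem : ∀ t : ℝ, τ ≤ t → (t : EReal) ≤ T → Meml2w a (v t))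
    (hvτ : v τ = φ) :
    ∀ t : ℝ, τ ≤ t → (t : EReal) ≤ T →
      Real.exp (-(a * c₀ * γ t)) * wnorm a (v t) ≤
        K * Real.exp (-(b * (t - τ) / 2)) * (Real.exp (-(a * c₀ * γ τ)) * wnorm a φ) := by
  intro t hτt htT
  have hIcc : ∀ s ∈ Icc τ t, 0 ≤ s ∧ (s : EReal) ≤ T := fun s hs =>
    ⟨hτ.trans hs.1, (EReal.coe_le_coe_iff.2 hs.2).trans htT⟩
  have hγIcc : ∀ s ∈ Icc τ t, HasDerivAt γ (γ' s) s := fun s hs => hγ s (hIcc s hs).1 (hIcc s hs).2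
  have hγ'Icc : ∀ s ∈ Icc τ t, 1 / 2 ≤ γ' s := fun s hs => hγ' s (hIcc s hs).1 (hIcc s hs).2
  obtain ⟨w, hw, hwmem, hwτ, hwt⟩ := exists_isLinTodaSol_of_modulated hτt one_half_pos hγIcc hγ'Icc
    (fun s hs n => (hode s hs.1 (hIcc s hs).2 n).1.prodMk (hode s hs.1 (hIcc s hs).2 n).2)
    (fun s hs => hmem s hs.1 (hIcc s hs).2)
  have hgrowth := mul_sub_le_sub_of_le_deriv hτt hγIcc hγ'Icc
  have hdecay := hKest (γ τ) w hw hwmem (by rwa [hwτ, hvτ]) (by rwa [hwτ, hvτ]) (γ t) (by linarith)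
  rw [hwτ, hwt, hvτ] at hdecay
  have hφ : 0 ≤ wnorm a φ := Real.sqrt_nonneg _
  calc Real.exp (-(a * c₀ * γ t)) * wnorm a (v t)
      = Real.exp (-(a * c₀ * γ τ)) * (Real.exp (-(a * c₀ * (γ t - γ τ))) * wnorm a (v t)) := by
        rw [← mul_assoc, ← Real.exp_add]; ring_nf
    _ ≤ Real.exp (-(a * c₀ * γ τ)) * (K * Real.exp (-(b * (γ t - γ τ))) * wnorm a φ) := by
        gcongr
    _ ≤ Real.exp (-(a * c₀ * γ τ)) * (K * Real.exp (-(b * (t - τ) / 2)) * wnorm a φ) := by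
        gcongr
        nlinarith
    _ = K * Real.exp (-(b * (t - τ) / 2)) * (Real.exp (-(a * c₀ * γ τ)) * wnorm a φ) := by ring

/-- Decay for the modulated non-autonomous linearized Toda equation. -/
theorem modulated_linearized_decay (c₀ a b K : ℝ) (hc₀ : 1 < c₀)
    (ha : 0 < a) (ha2 : a < 2 * kappa c₀)
    (hb : 0 < b) (hb2 : b < c₀ * a - 2 * Real.sinh (a / 2))
    (hK : 0 < K) (hKest : LinDecayEst c₀ a b K)
    (T : EReal) (hT : (0 : EReal) ≤ T)
    (γ γ' : ℝ → ℝ)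
    (hγ : ∀ t : ℝ, 0 ≤ t → (t : EReal) ≤ T → HasDerivAt γ (γ' t) t)
    (hγc : ContinuousOn γ' {t : ℝ | 0 ≤ t ∧ (t : EReal) ≤ T})
    (hγ' : ∀ t : ℝ, 0 ≤ t → (t : EReal) ≤ T → 1 / 2 ≤ γ' t)
    (τ : ℝ) (hτ : 0 ≤ τ) (hτT : (τ : EReal) ≤ T)
    (φ : ℤ → ℝ × ℝ) (hφ : Meml2w a φ)
    (horth1 : pairing φ (Jinv (ucDot c₀ (γ τ))) = 0)
    (horth2 : pairing φ (Jinv (ucDc c₀ (γ τ))) = 0)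
    (v : ℝ → ℤ → ℝ × ℝ)
    (hode : ∀ t : ℝ, τ ≤ t → (t : EReal) ≤ T → ∀ n : ℤ,
      HasDerivAt (fun s => (v s n).1) (γ' t * ((v t (n + 1)).2 - (v t n).2)) t ∧
      HasDerivAt (fun s => (v s n).2)
        (γ' t * (Real.exp (-(rtil c₀ ((n : ℝ) - c₀ * γ t))) * (v t n).1
          - Real.exp (-(rtil c₀ ((n : ℝ) - 1 - c₀ * γ t))) * (v t (n - 1)).1)) t)
    (hmem : ∀ t : ℝ, τ ≤ t → (t : EReal) ≤ T → Meml2w a (v t))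
    (hvτ : v τ = φ) :
    ∀ t : ℝ, τ ≤ t → (t : EReal) ≤ T →
      Real.exp (-(a * c₀ * γ t)) * wnorm a (v t) ≤
        K * Real.exp (-(b * (t - τ) / 2)) * (Real.exp (-(a * c₀ * γ τ)) * wnorm a φ) :=
  modulated_linearized_decay_general c₀ a b K hb hK hKest T γ γ' hγ hγ' τ hτ φ horth1 horth2 v hode
    hmem hvτ

end

end TodaPaper
end

section
/- Uniform ℓ² bound for Toda solutions: Let v₁ be a solution of the Toda lattice with v₁(0) = v₀ ∈ ℓ²(ℤ;ℝ²). Then sup_{t∈ℝ} ‖v₁(t)‖_{ℓ²} ≤ C‖v₀‖_{ℓ²}, where the constant C can be chosen as a nondecreasing function of ‖v₀‖_{ℓ²}; i.e., for every R > 0 there exists C(R) > 0 such that ‖v₀‖_{ℓ²} ≤ R implies sup_{t∈ℝ} ‖v₁(t)‖_{ℓ²} ≤ C(R)‖v₀‖_{ℓ²}. -/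
open Real Filter Set MeasureTheory

namespace TodaPaper

noncomputable section

/-!
The energy `H(u) = ∑ₙ V(rₙ) + pₙ² / 2` is comparable to the squared `ℓ²` norm on bounded sets:
`H ≤ e^{‖u‖} ‖u‖²` and, since `H` bounds every `V(rₙ)` and hence every `|rₙ|`,
`‖u‖² ≤ 4 e^{H+1} H`. So it suffices to show that `H` is conserved.

On a time interval where `‖u(t)‖` stays bounded, the energy of the sites in `[-N, N)` changes
only through the fluxes `V'(rₙ) pₙ₊₁` at the two ends; these are uniformly bounded and tend to `0`,
so dominated convergence gives conservation. A solution is only assumed to be differentiable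
site by site, so local boundedness of `t ↦ ‖u(t)‖` has to be proved. This norm is lower
semicontinuous; if the closed set `K` of times near which it is unbounded were nonempty, Baire's
theorem would give a relatively open piece of `K` on which it is bounded, and conservation of
energy on the complementary intervals, which extends to their endpoints in `K`, would make it
bounded near that piece after all.
-/

open Topology

theorem hasDerivAt_V (r : ℝ) : HasDerivAt V (V' r) r :=
  (((hasDerivAt_neg r).exp.sub_const 1).add (hasDerivAt_id r)).congr_deriv (by rw [V']; ring)

theorem continuous_V' : Continuous V' := continuous_const.sub continuous_neg.rexp

theorem V'_zero : V' 0 = 0 := by simp [V']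

theorem V_nonneg (r : ℝ) : 0 ≤ V r := by
  have := add_one_le_exp (-r)
  simp only [V]
  linarith

theorem V_le_mul_V' (r : ℝ) : V r ≤ r * V' r := by
  have h₁ := add_one_le_exp r
  have he : exp r * exp (-r) = 1 := by rw [← exp_add]; simp
  simp only [V, V']
  nlinarith [exp_pos (-r)]

theorem abs_V'_le (r : ℝ) : |V' r| ≤ |r| * exp |r| := by
  rcases le_total 0 r with hr | hr
  · have h₁ := add_one_le_exp (-r)
    have h₂ : exp (-r) ≤ 1 := exp_le_one_iff.2 (by linarith)
    have h₃ : 1 ≤ exp r := one_le_exp hr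
    rw [abs_of_nonneg hr, abs_of_nonneg (by simp only [V']; linarith)]
    simp only [V']
    nlinarith
  · have h₁ := add_one_le_exp r
    have h₂ : 1 ≤ exp (-r) := one_le_exp (by linarith)
    have he : exp r * exp (-r) = 1 := by rw [← exp_add]; simp
    rw [abs_of_nonpos hr, abs_of_nonpos (by simp only [V']; linarith)]
    simp only [V']
    nlinarith [exp_pos (-r)]

theorem V_le_exp_abs_mul_sq (r : ℝ) : V r ≤ exp |r| * r ^ 2 :=
  calc V r ≤ |r| * |V' r| := (V_le_mul_V' r).trans ((le_abs_self _).trans (abs_mul _ _).le)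
    _ ≤ |r| * (|r| * exp |r|) := by gcongr; exact abs_V'_le r
    _ = exp |r| * r ^ 2 := by rw [← sq_abs]; ring

theorem abs_le_V_add_one (r : ℝ) : |r| ≤ V r + 1 := by
  rcases le_total 0 r with hr | hr
  · rw [abs_of_nonneg hr]; simp only [V]; linarith [exp_pos (-r)]
  · rw [abs_of_nonpos hr]
    have := quadratic_le_exp_of_nonneg (neg_nonneg.2 hr)
    simp only [V]
    nlinarith

-- With `a = e^{-r/2}`: `V r ≥ (1 - a)²`, and `|1 - a|` is at least `r a / 2` for `r ≥ 0`
-- and at least `-r / 2` for `r ≤ 0`.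
theorem sq_le_four_mul_exp_abs_mul_V (r : ℝ) : r ^ 2 ≤ 4 * exp |r| * V r := by
  set a := exp (-r / 2)
  have ha : a ^ 2 = exp (-r) := by rw [sq, ← exp_add]; ring_nf
  have hV : (1 - a) ^ 2 ≤ V r := by
    have := add_one_le_exp (-r / 2)
    simp only [V, ← ha]
    nlinarith
  suffices r ^ 2 ≤ 4 * exp |r| * (1 - a) ^ 2 from this.trans (by gcongr)
  rcases le_total 0 r with hr | hr
  · have h₁ := add_one_le_exp (r / 2)
    have he : exp (r / 2) * a = 1 := by rw [← exp_add]; ring_nf; simp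
    have hr' : exp |r| = exp (r / 2) ^ 2 := by
      rw [abs_of_nonneg hr, sq, ← exp_add]; ring_nf
    have h₂ : r / 2 * a ≤ 1 - a := by nlinarith [exp_pos (-r / 2)]
    have h₃ : 0 ≤ r / 2 * a := by positivity
    rw [hr']
    nlinarith
  · have h₁ := add_one_le_exp (-r / 2)
    have h₂ : 1 ≤ exp |r| := one_le_exp (abs_nonneg r)
    nlinarith

def energyDensity (w : ℝ × ℝ) : ℝ := V w.1 + w.2 ^ 2 / 2

def mass (u : ℤ → ℝ × ℝ) : ℝ := ∑' n, nsq (u n)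

def energy (u : ℤ → ℝ × ℝ) : ℝ := ∑' n, energyDensity (u n)

theorem nsq_nonneg (w : ℝ × ℝ) : 0 ≤ nsq w := by unfold nsq; positivity

theorem energyDensity_nonneg (w : ℝ × ℝ) : 0 ≤ energyDensity w := by
  unfold energyDensity; have := V_nonneg w.1; positivity

theorem V_le_energyDensity (w : ℝ × ℝ) : V w.1 ≤ energyDensity w := by
  unfold energyDensity; linarith [sq_nonneg w.2]

theorem energyDensity_le_exp_mul_nsq {w : ℝ × ℝ} {m : ℝ} (h : |w.1| ≤ m) :
    energyDensity w ≤ exp m * nsq w := by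
  have h₁ : V w.1 ≤ exp m * w.1 ^ 2 :=
    (V_le_exp_abs_mul_sq w.1).trans (by gcongr)
  have h₂ : 1 ≤ exp m := one_le_exp ((abs_nonneg _).trans h)
  unfold energyDensity nsq
  nlinarith [sq_nonneg w.2]

theorem nsq_le_four_mul_exp_mul_energyDensity {w : ℝ × ℝ} {m : ℝ} (h : |w.1| ≤ m) :
    nsq w ≤ 4 * exp m * energyDensity w := by
  have h₁ : w.1 ^ 2 ≤ 4 * exp m * V w.1 :=
    (sq_le_four_mul_exp_abs_mul_V w.1).trans (by have := V_nonneg w.1; gcongr)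
  have h₂ : 1 ≤ exp m := one_le_exp ((abs_nonneg _).trans h)
  unfold energyDensity nsq
  nlinarith [sq_nonneg w.2]

theorem abs_fst_le_sqrt_nsq (w : ℝ × ℝ) : |w.1| ≤ √(nsq w) :=
  abs_le_sqrt (by unfold nsq; linarith [sq_nonneg w.2])

theorem abs_snd_le_sqrt_nsq (w : ℝ × ℝ) : |w.2| ≤ √(nsq w) :=
  abs_le_sqrt (by unfold nsq; linarith [sq_nonneg w.1])

theorem mass_nonneg (u : ℤ → ℝ × ℝ) : 0 ≤ mass u := tsum_nonneg fun _ => nsq_nonneg _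

theorem energy_nonneg (u : ℤ → ℝ × ℝ) : 0 ≤ energy u :=
  tsum_nonneg fun _ => energyDensity_nonneg _

section Mass

variable {u : ℤ → ℝ × ℝ}

theorem nsq_le_mass (hu : Meml2 u) (n : ℤ) : nsq (u n) ≤ mass u :=
  hu.le_tsum n fun _ _ => nsq_nonneg _

theorem abs_fst_le_sqrt_mass (hu : Meml2 u) (n : ℤ) : |(u n).1| ≤ √(mass u) :=
  (abs_fst_le_sqrt_nsq _).trans (sqrt_le_sqrt (nsq_le_mass hu n))

theorem abs_snd_le_sqrt_mass (hu : Meml2 u) (n : ℤ) : |(u n).2| ≤ √(mass u) :=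
  (abs_snd_le_sqrt_nsq _).trans (sqrt_le_sqrt (nsq_le_mass hu n))

theorem summable_energyDensity (hu : Meml2 u) : Summable fun n => energyDensity (u n) :=
  .of_nonneg_of_le (fun _ => energyDensity_nonneg _)
    (fun n => energyDensity_le_exp_mul_nsq (abs_fst_le_sqrt_mass hu n)) (hu.mul_left _)

theorem energy_le_exp_sqrt_mass_mul_mass (hu : Meml2 u) : energy u ≤ exp √(mass u) * mass u := by
  rw [mass, ← tsum_mul_left]
  exact (summable_energyDensity hu).tsum_le_tsum
    (fun n => energyDensity_le_exp_mul_nsq (abs_fst_le_sqrt_mass hu n)) (hu.mul_left _)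

theorem mass_le_four_mul_exp_mul_energy (hu : Meml2 u) {h : ℝ} (hE : energy u ≤ h) :
    mass u ≤ 4 * exp (h + 1) * energy u := by
  have hsum := summable_energyDensity hu
  have hr : ∀ n, |(u n).1| ≤ h + 1 := fun n =>
    calc |(u n).1| ≤ V (u n).1 + 1 := abs_le_V_add_one _
      _ ≤ energy u + 1 := by
        grw [V_le_energyDensity, hsum.le_tsum n fun _ _ => energyDensity_nonneg _]; rfl
      _ ≤ h + 1 := by linarith
  rw [energy, ← tsum_mul_left]
  exact hu.tsum_le_tsum (fun n => nsq_le_four_mul_exp_mul_energyDensity (hr n)) (hsum.mul_left _)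

theorem mass_le_of_energy_eq {w : ℤ → ℝ × ℝ} (hu : Meml2 u) (hw : Meml2 w)
    (h : energy u = energy w) {c : ℝ} (hc : mass w ≤ c) :
    mass u ≤ 4 * exp (exp √c * c + 1) * (exp √c * c) := by
  have hE : energy u ≤ exp √c * c :=
    h ▸ (energy_le_exp_sqrt_mass_mul_mass hw).trans (by have := mass_nonneg w; gcongr)
  exact (mass_le_four_mul_exp_mul_energy hu hE).trans (by have := energy_nonneg u; gcongr)

end Mass

theorem IsCompact.exists_forall_le_of_eventually_le {X α : Type*} [TopologicalSpace X]
    [SemilatticeSup α] [Nonempty α] {S : Set X} (hS : IsCompact S) {f : X → α}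
    (hf : ∀ x ∈ S, ∃ M, ∀ᶠ y in 𝓝 x, f y ≤ M) : ∃ M, ∀ x ∈ S, f x ≤ M := by
  refine hS.induction_on (p := fun T => ∃ M, ∀ x ∈ T, f x ≤ M) ?_ ?_ ?_ ?_
  · exact ⟨Classical.arbitrary α, by simp⟩
  · rintro T₁ T₂ hT ⟨M, hM⟩
    exact ⟨M, fun x hx => hM x (hT hx)⟩
  · rintro T₁ T₂ ⟨M₁, hM₁⟩ ⟨M₂, hM₂⟩
    refine ⟨M₁ ⊔ M₂, fun x hx => ?_⟩
    rcases hx with hx | hx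
    · exact (hM₁ x hx).trans le_sup_left
    · exact (hM₂ x hx).trans le_sup_right
  · intro x hx
    obtain ⟨M, hM⟩ := hf x hx
    exact ⟨_, mem_nhdsWithin_of_mem_nhds hM, M, fun y hy => hy⟩

section Conservation

-- For a Toda solution, `Q t` is the squared norm and `E t` the energy at time `t`.
variable {β : Type*} {Q : ℝ → ℝ} {E : ℝ → β} {Φ : ℝ → ℝ}

theorem eq_of_exists_eventually_le_of_ne
    (hcons : ∀ a b M, (∀ s ∈ uIcc a b, Q s ≤ M) → E a = E b)
    (hΦ : ∀ s t c, E s = E t → Q t ≤ c → Q s ≤ Φ c) {α s : ℝ}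
    (hloc : ∀ σ ∈ uIcc α s, σ ≠ α → ∃ M, ∀ᶠ τ in 𝓝 σ, Q τ ≤ M) : E α = E s := by
  have hinterior : ∀ σ ∈ uIcc α s, σ ≠ α → E σ = E s := by
    intro σ hσ hσα
    obtain ⟨M, hM⟩ := IsCompact.exists_forall_le_of_eventually_le isCompact_uIcc fun τ hτ =>
      hloc τ (uIcc_subset_uIcc_right hσ hτ) fun hτα => hσα (eq_of_mem_uIcc_of_mem_uIcc
        (hτα ▸ hτ) hσ).symm
    exact hcons σ s M hM
  refine hcons α s (max (Q α) (Φ (Q s))) fun σ hσ => ?_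
  rcases eq_or_ne σ α with rfl | hσα
  · exact le_max_left _ _
  · exact (hΦ σ s (Q s) (hinterior σ hσ hσα) le_rfl).trans (le_max_right _ _)

theorem eq_of_abs_sub_le_of_mem_uIcc {α σ s : ℝ} (hσ : σ ∈ uIcc α s) (h : |α - s| ≤ |σ - s|) :
    σ = α := by
  rcases mem_uIcc.1 hσ with ⟨h₁, h₂⟩ | ⟨h₁, h₂⟩
  · rw [abs_of_nonpos (by linarith), abs_of_nonpos (by linarith)] at h; linarith
  · rw [abs_of_nonneg (by linarith), abs_of_nonneg (by linarith)] at h; linarith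

theorem exists_eventually_le_of_conservation (hQ : LowerSemicontinuous Q)
    (hcons : ∀ a b M, (∀ s ∈ uIcc a b, Q s ≤ M) → E a = E b)
    (hΦ : ∀ s t c, E s = E t → Q t ≤ c → Q s ≤ Φ c) (x : ℝ) :
    ∃ M, ∀ᶠ s in 𝓝 x, Q s ≤ M := by
  set G := {x | ∃ M, ∀ᶠ s in 𝓝 x, Q s ≤ M}
  have hG : IsOpen G := isOpen_iff_mem_nhds.2 fun x ⟨M, hM⟩ =>
    hM.eventually_nhds.mono fun y hy => ⟨M, hy⟩
  by_contra hx
  set K := Gᶜ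
  have hK : IsClosed K := hG.isClosed_compl
  have : CompleteSpace K := hK.completeSpace_coe
  have : Nonempty K := ⟨⟨x, hx⟩⟩
  -- Baire: on some relatively open piece of `K`, `Q` is bounded by an integer `k`
  obtain ⟨k, y, hy⟩ := nonempty_interior_of_iUnion_of_closed
    (f := fun k : ℕ => {y : K | Q y ≤ k})
    (fun k => (hQ.isClosed_preimage k).preimage continuous_subtype_val)
    (iUnion_eq_univ_iff.2 fun y => ⟨⌈Q y⌉₊, Nat.le_ceil (Q y)⟩)
  have hyK : ∀ᶠ z in 𝓝 (y : ℝ), z ∈ K → Q z ≤ k := by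
    rw [← eventually_nhdsWithin_iff, ← eventually_nhds_subtype_iff]
    exact mem_interior_iff_mem_nhds.1 hy
  obtain ⟨ε, hε, hball⟩ := Metric.eventually_nhds_iff_ball.1 hyK
  refine y.2 ⟨max k (Φ k), Metric.eventually_nhds_iff_ball.2 ⟨ε, hε, fun s hs => ?_⟩⟩
  by_cases hsK : s ∈ K
  · exact (hball s hs hsK).trans (le_max_left _ _)
  have hsub : uIcc (y : ℝ) s ⊆ Metric.ball (y : ℝ) ε := fun σ hσ =>
    Metric.mem_ball'.2 ((Real.dist_left_le_of_mem_uIcc hσ).trans_lt (Metric.mem_ball'.1 hs))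
  -- the point of `K` between `y` and `s` closest to `s`
  obtain ⟨α, ⟨hαK, hαI⟩, hmin⟩ := (isCompact_uIcc.inter_left hK).exists_isMinOn
    ⟨y, y.2, left_mem_uIcc⟩ (continuous_id.sub continuous_const).abs.continuousOn
  have hαs : E α = E s := eq_of_exists_eventually_le_of_ne hcons hΦ fun σ hσ hσα => by
    by_contra hσK
    exact hσα (eq_of_abs_sub_le_of_mem_uIcc hσ (hmin ⟨hσK, uIcc_subset_uIcc_right hαI hσ⟩))
  exact (hΦ s α k hαs.symm (hball α (hsub hαI) hαK)).trans (le_max_right _ _)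

theorem eq_of_conservation (hQ : LowerSemicontinuous Q)
    (hcons : ∀ a b M, (∀ s ∈ uIcc a b, Q s ≤ M) → E a = E b)
    (hΦ : ∀ s t c, E s = E t → Q t ≤ c → Q s ≤ Φ c) (a b : ℝ) : E a = E b := by
  obtain ⟨M, hM⟩ := IsCompact.exists_forall_le_of_eventually_le isCompact_uIcc
    fun x _ => exists_eventually_le_of_conservation hQ hcons hΦ x
  exact hcons a b M hM

end Conservation

theorem sum_Ico_sub_sub_one {M : Type*} [AddCommGroup M] (g : ℤ → M) {a b : ℤ} (hab : a ≤ b) :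
    ∑ n ∈ Finset.Ico a b, (g n - g (n - 1)) = g (b - 1) - g (a - 1) := by
  induction b, hab using Int.leInduction with
  | base => simp
  | succ b hab ih =>
    rw [← Finset.insert_Ico_right_eq_Ico_add_one hab, Finset.sum_insert Finset.right_notMem_Ico,
      ih, add_sub_cancel_right]
    abel

def flux (u : ℤ → ℝ × ℝ) (n : ℤ) : ℝ := V' (u n).1 * (u (n + 1)).2

theorem abs_flux_le {u : ℤ → ℝ × ℝ} (hu : Meml2 u) {M : ℝ} (hM : mass u ≤ M) (n : ℤ) :
    |flux u n| ≤ M * exp √M := by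
  have hr := (abs_fst_le_sqrt_mass hu n).trans (sqrt_le_sqrt hM)
  have hp := (abs_snd_le_sqrt_mass hu (n + 1)).trans (sqrt_le_sqrt hM)
  calc |flux u n| = |V' (u n).1| * |(u (n + 1)).2| := abs_mul _ _
    _ ≤ (√M * exp √M) * √M := by
      gcongr
      exact (abs_V'_le _).trans (by gcongr)
    _ = M * exp √M := by
      rw [mul_right_comm, mul_self_sqrt ((mass_nonneg u).trans hM)]

theorem tendsto_flux_cofinite {u : ℤ → ℝ × ℝ} (hu : Meml2 u) :
    Tendsto (flux u) cofinite (𝓝 0) := by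
  have hnsq : Tendsto (fun n => √(nsq (u n))) cofinite (𝓝 0) := by
    have := (continuous_sqrt.tendsto 0).comp hu.tendsto_cofinite_zero
    rwa [sqrt_zero] at this
  have hr : Tendsto (fun n => (u n).1) cofinite (𝓝 0) :=
    squeeze_zero_norm (fun n => abs_fst_le_sqrt_nsq (u n)) hnsq
  have hp : Tendsto (fun n => (u n).2) cofinite (𝓝 0) :=
    squeeze_zero_norm (fun n => abs_snd_le_sqrt_nsq (u n)) hnsq
  have hV' : Tendsto (fun n => V' (u n).1) cofinite (𝓝 0) := by
    have := (continuous_V'.tendsto 0).comp hr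
    rwa [V'_zero] at this
  have := hV'.mul (hp.comp (add_left_injective 1).tendsto_cofinite)
  rwa [mul_zero] at this

theorem tendsto_natCast_sub_cofinite (c : ℤ) :
    Tendsto (fun N : ℕ => (N : ℤ) - c) atTop cofinite :=
  Nat.cofinite_eq_atTop ▸ Function.Injective.tendsto_cofinite fun x y h => by simpa using h

theorem tendsto_neg_natCast_sub_cofinite (c : ℤ) :
    Tendsto (fun N : ℕ => -(N : ℤ) - c) atTop cofinite :=
  Nat.cofinite_eq_atTop ▸ Function.Injective.tendsto_cofinite fun x y h => by simpa using h

theorem tendsto_sum_Ico_energyDensity {u : ℤ → ℝ × ℝ} (hu : Meml2 u) :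
    Tendsto (fun N : ℕ => ∑ n ∈ Finset.Ico (-N : ℤ) N, energyDensity (u n)) atTop
      (𝓝 (energy u)) := by
  refine (summable_energyDensity hu).hasSum.comp (tendsto_atTop_finset_of_monotone ?_ ?_)
  · intro i j hij
    exact Finset.Ico_subset_Ico (by omega) (by omega)
  · intro n
    exact ⟨n.natAbs + 1, by simp only [Finset.mem_Ico]; omega⟩

namespace IsTodaSolution

variable {v : ℝ → ℤ → ℝ × ℝ}

theorem continuous_fst (hv : IsTodaSolution v) (n : ℤ) : Continuous fun s => (v s n).1 :=
  continuous_iff_continuousAt.2 fun s => (hv.dr s n).continuousAt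

theorem continuous_snd (hv : IsTodaSolution v) (n : ℤ) : Continuous fun s => (v s n).2 :=
  continuous_iff_continuousAt.2 fun s => (hv.dp s n).continuousAt

theorem continuous_flux (hv : IsTodaSolution v) (n : ℤ) : Continuous fun s => flux (v s) n :=
  (continuous_V'.comp (hv.continuous_fst n)).mul (hv.continuous_snd (n + 1))

theorem hasDerivAt_energyDensity (hv : IsTodaSolution v) (t : ℝ) (n : ℤ) :
    HasDerivAt (fun s => energyDensity (v s n)) (flux (v t) n - flux (v t) (n - 1)) t := by
  have := ((hasDerivAt_V _).comp t (hv.dr t n)).add (((hv.dp t n).pow 2).div_const 2)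
  refine this.congr_deriv ?_
  simp only [flux, sub_add_cancel]
  ring

theorem hasDerivAt_sum_Ico_energyDensity (hv : IsTodaSolution v) (t : ℝ) (N : ℕ) :
    HasDerivAt (fun s => ∑ n ∈ Finset.Ico (-N : ℤ) N, energyDensity (v s n))
      (flux (v t) (N - 1) - flux (v t) (-N - 1)) t := by
  have := HasDerivAt.fun_sum fun n (_ : n ∈ Finset.Ico (-N : ℤ) N) =>
    hv.hasDerivAt_energyDensity t n
  rwa [sum_Ico_sub_sub_one _ (by omega)] at this

theorem lowerSemicontinuous_mass (hv : IsTodaSolution v) :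
    LowerSemicontinuous fun t => mass (v t) := by
  have hlub : ∀ t, IsLUB (range fun F : Finset ℤ => ∑ n ∈ F, nsq (v t n)) (mass (v t)) :=
    fun t => isLUB_hasSum (fun n => nsq_nonneg _) (hv.mem t).hasSum
  simp_rw [fun t => (hlub t).ciSup_eq.symm]
  refine lowerSemicontinuous_ciSup (fun t => (hlub t).bddAbove) fun F => ?_
  refine (continuous_finsetSum F fun n _ => ?_).lowerSemicontinuous
  exact ((hv.continuous_fst n).pow 2).add ((hv.continuous_snd n).pow 2)

theorem energy_eq_of_forall_mass_le (hv : IsTodaSolution v) {a b M : ℝ}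
    (hM : ∀ s ∈ uIcc a b, mass (v s) ≤ M) : energy (v a) = energy (v b) := by
  set F : ℕ → ℝ → ℝ := fun N s => flux (v s) (N - 1) - flux (v s) (-N - 1)
  have hF : ∀ N, Continuous (F N) := fun N =>
    (hv.continuous_flux _).sub (hv.continuous_flux _)
  have hFTC : ∀ N : ℕ, ∫ s in a..b, F N s = ∑ n ∈ Finset.Ico (-N : ℤ) N, energyDensity (v b n)
      - ∑ n ∈ Finset.Ico (-N : ℤ) N, energyDensity (v a n) := fun N =>
    intervalIntegral.integral_eq_sub_of_hasDerivAt
      (fun s _ => hv.hasDerivAt_sum_Ico_energyDensity s N) ((hF N).intervalIntegrable a b)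
  -- the fluxes through the ends of `[-N, N)` are bounded on `[a, b]` and vanish as `N → ∞`
  have hlim : Tendsto (fun N => ∫ s in a..b, F N s) atTop (𝓝 0) := by
    rw [← intervalIntegral.integral_zero (a := a) (b := b) (μ := volume)]
    refine intervalIntegral.tendsto_integral_filter_of_dominated_convergence
      (fun _ => 2 * (M * exp √M)) (Eventually.of_forall fun N => (hF N).aestronglyMeasurable)
      (Eventually.of_forall fun N => ae_of_all _ fun s hs => ?_) intervalIntegrable_const
      (ae_of_all _ fun s _ => ?_)
    · have hs' := hM s (uIoc_subset_uIcc hs)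
      calc ‖F N s‖ ≤ |flux (v s) (N - 1)| + |flux (v s) (-N - 1)| := abs_sub _ _
        _ ≤ 2 * (M * exp √M) := by
          linarith [abs_flux_le (hv.mem s) hs' (N - 1), abs_flux_le (hv.mem s) hs' (-N - 1)]
    · have h := tendsto_flux_cofinite (hv.mem s)
      simpa using (h.comp (tendsto_natCast_sub_cofinite 1)).sub
        (h.comp (tendsto_neg_natCast_sub_cofinite 1))
  have := (tendsto_sum_Ico_energyDensity (hv.mem b)).sub (tendsto_sum_Ico_energyDensity (hv.mem a))
  simp_rw [← hFTC] at this
  linarith [tendsto_nhds_unique this hlim]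

end IsTodaSolution

/-- Uniform `ℓ²` bound for Toda solutions, with a constant which is a
nondecreasing function of the size of the initial data. -/
theorem toda_uniform_l2_bound :
    ∀ R > (0:ℝ), ∃ C > (0:ℝ), ∀ v₁ : ℝ → ℤ → ℝ × ℝ, IsTodaSolution v₁ →
      l2norm (v₁ 0) ≤ R → ∀ t : ℝ, l2norm (v₁ t) ≤ C * l2norm (v₁ 0) := by
  intro R hR
  set K := 4 * exp (exp R * R ^ 2 + 1) * exp R
  refine ⟨√K, by positivity, fun v hv hR0 t => ?_⟩
  have hconserved : energy (v t) = energy (v 0) :=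
    eq_of_conservation hv.lowerSemicontinuous_mass
      (fun a b M hM => hv.energy_eq_of_forall_mass_le hM)
      (fun s s' c h hc => mass_le_of_energy_eq (hv.mem s) (hv.mem s') h hc) t 0
  have hE : energy (v 0) ≤ exp R * mass (v 0) :=
    (energy_le_exp_sqrt_mass_mul_mass (hv.mem 0)).trans <| by
      have := mass_nonneg (v 0)
      gcongr
      exact hR0
  have hmass : mass (v 0) ≤ R ^ 2 := (sqrt_le_left hR.le).1 hR0
  have hmass_t : mass (v t) ≤ K * mass (v 0) :=
    calc mass (v t) ≤ 4 * exp (exp R * R ^ 2 + 1) * energy (v t) :=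
          mass_le_four_mul_exp_mul_energy (hv.mem t) (hconserved ▸ hE.trans (by gcongr))
      _ = 4 * exp (exp R * R ^ 2 + 1) * energy (v 0) := by rw [hconserved]
      _ ≤ 4 * exp (exp R * R ^ 2 + 1) * (exp R * mass (v 0)) := by gcongr
      _ = K * mass (v 0) := by ring
  calc l2norm (v t) = √(mass (v t)) := rfl
    _ ≤ √(K * mass (v 0)) := sqrt_le_sqrt hmass_t
    _ = √K * l2norm (v 0) := sqrt_mul (by positivity) _

end

end TodaPaper
end

section
/- Boundedness and right-inverse property of J⁻¹ on the backward-weighted space: Let a > 0. For every (r,p) ∈ ℓ²_{−a} × ℓ²_{−a}, the series defining K(r,p) := ( Σ_{k=0}^∞ p(·−k), Σ_{k=1}^∞ r(·−k) ) converge absolutely at every n ∈ ℤ, K(r,p) ∈ ℓ²_{−a} × ℓ²_{−a} with ‖K(r,p)‖_{ℓ²_{−a}} ≤ (1 − e^{−a})^{−1} ‖(r,p)‖_{ℓ²_{−a}}, and J(K(r,p)) = (r,p), where J(r,p) := ( p(·+1) − p(·), r(·) − r(·−1) ). -/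
/-!
After multiplication by the weight `e^{-an}`, each component of `J⁻¹` is dominated by the
convolution of the weighted sequence `e^{-am} |f m|` with the geometric sequence
`(e^{-ak})_{k ≥ 0}`, of total mass `(1 - e^{-a})⁻¹`. Cauchy–Schwarz against these geometric
weights and an exchange of summations give the discrete Young inequality
`‖g * w‖₂ ≤ ‖g‖₁ ‖w‖₂`, hence the bound; the second component is a backward shift of such a tail
sum, and that shift does not increase the `ℓ²_{-a}` norm. `J (J⁻¹ u) = u` is telescoping:
consecutive tail sums differ by their first term.
-/

open Real Filter Set MeasureTheory

namespace TodaPaper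

noncomputable section

def geomConv (r : ℝ) (w : ℤ → ℝ) (n : ℤ) : ℝ := ∑' k : ℕ, r ^ k * w (n - k)

section GeomConv

variable {r : ℝ} {w : ℤ → ℝ}

lemma summable_comp_sub_natCast {f : ℤ → ℝ} (hf : Summable f) (n : ℤ) :
    Summable fun k : ℕ => f (n - k) :=
  hf.comp_injective ((sub_right_injective (b := n)).comp Nat.cast_injective)

lemma summable_geom_mul_comp_sub (hr0 : 0 ≤ r) (hr1 : r < 1)
    (hw : Summable fun n : ℤ => w n ^ 2) (n : ℤ) :
    Summable fun k : ℕ => r ^ k * w (n - k) := by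
  refine ((summable_geometric_of_lt_one hr0 hr1).add
    (summable_comp_sub_natCast hw n)).of_norm_bounded fun k => ?_
  -- `r^k |w| ≤ r^k + w^2`: use the first term when `|w| ≤ 1`, the second otherwise.
  have hrk : r ^ k ≤ 1 := pow_le_one₀ hr0 hr1.le
  rw [Real.norm_eq_abs, abs_mul, abs_of_nonneg (pow_nonneg hr0 k), ← sq_abs (w (n - k))]
  nlinarith [sq_nonneg (|w (n - k)| - r ^ k / 2), pow_nonneg hr0 k]

lemma summable_geom_mul_sq_comp_sub (hr0 : 0 ≤ r) (hr1 : r < 1)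
    (hw : Summable fun n : ℤ => w n ^ 2) (n : ℤ) :
    Summable fun k : ℕ => r ^ k * w (n - k) ^ 2 :=
  (summable_comp_sub_natCast hw n).of_nonneg_of_le (fun k => by positivity)
    fun k => mul_le_of_le_one_left (sq_nonneg _) (pow_le_one₀ hr0 hr1.le)

-- Cauchy–Schwarz against the weights `r^k`, whose total mass is `(1 - r)⁻¹`.
lemma sq_geomConv_le (hr0 : 0 ≤ r) (hr1 : r < 1) (hw : Summable fun n : ℤ => w n ^ 2)
    (n : ℤ) : geomConv r w n ^ 2 ≤ (1 - r)⁻¹ * ∑' k : ℕ, r ^ k * w (n - k) ^ 2 := by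
  have hgeo := summable_geometric_of_lt_one hr0 hr1
  have hsq := summable_geom_mul_sq_comp_sub hr0 hr1 hw n
  refine le_of_tendsto' (((summable_geom_mul_comp_sub hr0 hr1 hw n).hasSum.tendsto_sum_nat).pow 2)
    fun N => ?_
  calc (∑ k ∈ Finset.range N, r ^ k * w (n - k)) ^ 2
      ≤ (∑ k ∈ Finset.range N, r ^ k) * ∑ k ∈ Finset.range N, r ^ k * w (n - k) ^ 2 :=
        Finset.sum_sq_le_sum_mul_sum_of_sq_le_mul _ (fun k _ => by positivity)
          (fun k _ => by positivity) fun k _ => le_of_eq (by ring)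
    _ ≤ (1 - r)⁻¹ * ∑' k : ℕ, r ^ k * w (n - k) ^ 2 := by
        rw [← tsum_geometric_of_lt_one hr0 hr1]
        gcongr
        · exact hgeo.sum_le_tsum _ fun k _ => by positivity
        · exact hsq.sum_le_tsum _ fun k _ => by positivity

-- Tonelli: row `k` of the nonnegative double series sums to `r^k ∑ w^2`.
lemma hasSum_tsum_geom_mul_sq_comp_sub (hr0 : 0 ≤ r) (hr1 : r < 1)
    (hw : Summable fun n : ℤ => w n ^ 2) :
    HasSum (fun n : ℤ => ∑' k : ℕ, r ^ k * w (n - k) ^ 2) ((1 - r)⁻¹ * ∑' n : ℤ, w n ^ 2) := by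
  have hshift (k : ℕ) : HasSum (fun n : ℤ => w (n - k) ^ 2) (∑' n : ℤ, w n ^ 2) :=
    (Equiv.subRight (k : ℤ)).hasSum_iff.mpr hw.hasSum
  have hrow (k : ℕ) : HasSum (fun n : ℤ => r ^ k * w (n - k) ^ 2) (r ^ k * ∑' n : ℤ, w n ^ 2) :=
    (hshift k).mul_left _
  have hF : Summable fun p : ℕ × ℤ => r ^ p.1 * w (p.2 - p.1) ^ 2 := by
    refine (summable_prod_of_nonneg fun p => mul_nonneg (pow_nonneg hr0 _) (sq_nonneg _)).mpr
      ⟨fun k => (hrow k).summable, ?_⟩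
    simp only [fun k => (hrow k).tsum_eq]
    exact (summable_geometric_of_lt_one hr0 hr1).mul_right _
  have hswap := ((Equiv.prodComm ℤ ℕ).hasSum_iff.mpr hF.hasSum).prod_fiberwise fun n =>
    (summable_geom_mul_sq_comp_sub hr0 hr1 hw n).hasSum
  convert hswap using 1
  rw [hF.tsum_prod, tsum_congr fun k => (hrow k).tsum_eq, tsum_mul_right,
    tsum_geometric_of_lt_one hr0 hr1]

lemma summable_sq_geomConv (hr0 : 0 ≤ r) (hr1 : r < 1) (hw : Summable fun n : ℤ => w n ^ 2) :
    Summable fun n : ℤ => geomConv r w n ^ 2 :=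
  ((hasSum_tsum_geom_mul_sq_comp_sub hr0 hr1 hw).summable.mul_left (1 - r)⁻¹).of_nonneg_of_le
    (fun _ => sq_nonneg _) (sq_geomConv_le hr0 hr1 hw)

lemma tsum_sq_geomConv_le (hr0 : 0 ≤ r) (hr1 : r < 1) (hw : Summable fun n : ℤ => w n ^ 2) :
    ∑' n : ℤ, geomConv r w n ^ 2 ≤ (1 - r)⁻¹ ^ 2 * ∑' n : ℤ, w n ^ 2 := by
  have H := hasSum_tsum_geom_mul_sq_comp_sub hr0 hr1 hw
  calc ∑' n : ℤ, geomConv r w n ^ 2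
      ≤ ∑' n : ℤ, (1 - r)⁻¹ * ∑' k : ℕ, r ^ k * w (n - k) ^ 2 :=
        (summable_sq_geomConv hr0 hr1 hw).tsum_le_tsum (sq_geomConv_le hr0 hr1 hw)
          (H.summable.mul_left _)
    _ = (1 - r)⁻¹ ^ 2 * ∑' n : ℤ, w n ^ 2 := by rw [tsum_mul_left, H.tsum_eq, sq, mul_assoc]

end GeomConv

-- `Jinv u n` is definitionally
-- `(tailSum (fun m => (u m).2) n, tailSum (fun m => (u m).1) (n - 1))`.
def tailSum (f : ℤ → ℝ) (n : ℤ) : ℝ := ∑' k : ℕ, f (n - k)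

lemma tailSum_sub_tailSum_sub_one {f : ℤ → ℝ} {n : ℤ} (hf : Summable fun k : ℕ => f (n - k)) :
    tailSum f n - tailSum f (n - 1) = f n := by
  rw [tailSum, hf.tsum_eq_zero_add, tailSum]
  simp only [Nat.cast_add, Nat.cast_one, Nat.cast_zero, sub_zero, add_sub_cancel_right,
    sub_add_eq_sub_sub_swap]

lemma sq_exp_mul_abs (b x y : ℝ) : (Real.exp (b * x) * |y|) ^ 2 = Real.exp (2 * b * x) * y ^ 2 := by
  rw [mul_pow, sq_abs, ← Real.exp_nat_mul]
  ring_nf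

lemma exp_mul_abs_comp_sub (b : ℝ) (f : ℤ → ℝ) (n : ℤ) (k : ℕ) :
    Real.exp (b * n) * |f (n - k)| =
      Real.exp b ^ k * (Real.exp (b * ((n - k : ℤ) : ℝ)) * |f (n - k)|) := by
  rw [← Real.exp_nat_mul, ← mul_assoc, ← Real.exp_add]
  push_cast
  ring_nf

section Weighted

variable {b : ℝ} {f : ℤ → ℝ}

lemma summable_sq_exp_mul_abs (hf : Summable fun n : ℤ => Real.exp (2 * b * n) * f n ^ 2) :
    Summable fun m : ℤ => (Real.exp (b * m) * |f m|) ^ 2 := by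
  simpa only [sq_exp_mul_abs] using hf

lemma summable_abs_comp_sub (hb : b < 0)
    (hf : Summable fun n : ℤ => Real.exp (2 * b * n) * f n ^ 2) (n : ℤ) :
    Summable fun k : ℕ => |f (n - k)| := by
  refine ((summable_geom_mul_comp_sub (Real.exp_pos b).le (Real.exp_lt_one_iff.mpr hb)
    (summable_sq_exp_mul_abs hf) n).mul_left
    (Real.exp (-(b * n)))).congr fun k => ?_
  rw [← exp_mul_abs_comp_sub, ← mul_assoc, ← Real.exp_add, neg_add_cancel, Real.exp_zero, one_mul]

lemma exp_mul_abs_tailSum_le (hb : b < 0)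
    (hf : Summable fun n : ℤ => Real.exp (2 * b * n) * f n ^ 2) (n : ℤ) :
    Real.exp (b * n) * |tailSum f n| ≤
      geomConv (Real.exp b) (fun m : ℤ => Real.exp (b * m) * |f m|) n :=
  calc Real.exp (b * n) * |tailSum f n| ≤ Real.exp (b * n) * ∑' k : ℕ, |f (n - k)| := by
        gcongr
        exact norm_tsum_le_tsum_norm (f := fun k : ℕ => f (n - k)) (summable_abs_comp_sub hb hf n)
    _ = _ := by
        rw [← tsum_mul_left]
        exact tsum_congr (exp_mul_abs_comp_sub b f n)

lemma weighted_sq_tailSum_le (hb : b < 0)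
    (hf : Summable fun n : ℤ => Real.exp (2 * b * n) * f n ^ 2) (n : ℤ) :
    Real.exp (2 * b * n) * tailSum f n ^ 2 ≤
      geomConv (Real.exp b) (fun m : ℤ => Real.exp (b * m) * |f m|) n ^ 2 := by
  rw [← sq_exp_mul_abs]
  exact pow_le_pow_left₀ (by positivity) (exp_mul_abs_tailSum_le hb hf n) 2

lemma summable_weighted_sq_tailSum (hb : b < 0)
    (hf : Summable fun n : ℤ => Real.exp (2 * b * n) * f n ^ 2) :
    Summable fun n : ℤ => Real.exp (2 * b * n) * tailSum f n ^ 2 :=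
  (summable_sq_geomConv (Real.exp_pos b).le (Real.exp_lt_one_iff.mpr hb)
    (summable_sq_exp_mul_abs hf)).of_nonneg_of_le (fun _ => by positivity)
    (weighted_sq_tailSum_le hb hf)

lemma tsum_weighted_sq_tailSum_le (hb : b < 0)
    (hf : Summable fun n : ℤ => Real.exp (2 * b * n) * f n ^ 2) :
    ∑' n : ℤ, Real.exp (2 * b * n) * tailSum f n ^ 2 ≤
      (1 - Real.exp b)⁻¹ ^ 2 * ∑' n : ℤ, Real.exp (2 * b * n) * f n ^ 2 := by
  have hw := summable_sq_exp_mul_abs hf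
  calc ∑' n : ℤ, Real.exp (2 * b * n) * tailSum f n ^ 2
      ≤ ∑' n : ℤ, geomConv (Real.exp b) (fun m : ℤ => Real.exp (b * m) * |f m|) n ^ 2 :=
        (summable_weighted_sq_tailSum hb hf).tsum_le_tsum (weighted_sq_tailSum_le hb hf)
          (summable_sq_geomConv (Real.exp_pos b).le (Real.exp_lt_one_iff.mpr hb) hw)
    _ ≤ (1 - Real.exp b)⁻¹ ^ 2 * ∑' n : ℤ, Real.exp (2 * b * n) * f n ^ 2 := by
        simpa only [sq_exp_mul_abs] using
          tsum_sq_geomConv_le (Real.exp_pos b).le (Real.exp_lt_one_iff.mpr hb) hw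

lemma weighted_sq_comp_sub_one_le (hb : b ≤ 0) (f : ℤ → ℝ) (n : ℤ) :
    Real.exp (2 * b * n) * f (n - 1) ^ 2 ≤ Real.exp (2 * b * ((n - 1 : ℤ) : ℝ)) * f (n - 1) ^ 2 :=
  mul_le_mul_of_nonneg_right (Real.exp_le_exp.mpr (by push_cast; nlinarith)) (sq_nonneg _)

lemma summable_weighted_sq_comp_sub_one (hb : b ≤ 0)
    (hf : Summable fun n : ℤ => Real.exp (2 * b * n) * f n ^ 2) :
    Summable fun n : ℤ => Real.exp (2 * b * n) * f (n - 1) ^ 2 :=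
  ((Equiv.subRight (1 : ℤ)).summable_iff.mpr hf).of_nonneg_of_le (fun _ => by positivity)
    (weighted_sq_comp_sub_one_le hb f)

lemma tsum_weighted_sq_comp_sub_one_le (hb : b ≤ 0)
    (hf : Summable fun n : ℤ => Real.exp (2 * b * n) * f n ^ 2) :
    ∑' n : ℤ, Real.exp (2 * b * n) * f (n - 1) ^ 2 ≤ ∑' n : ℤ, Real.exp (2 * b * n) * f n ^ 2 :=
  ((summable_weighted_sq_comp_sub_one hb hf).tsum_le_tsum (weighted_sq_comp_sub_one_le hb f)
    ((Equiv.subRight (1 : ℤ)).summable_iff.mpr hf)).trans_eq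
    ((Equiv.subRight (1 : ℤ)).tsum_eq fun n : ℤ => Real.exp (2 * b * n) * f n ^ 2)

end Weighted

lemma meml2w_iff {b : ℝ} {u : ℤ → ℝ × ℝ} :
    Meml2w b u ↔ (Summable fun n : ℤ => Real.exp (2 * b * n) * (u n).1 ^ 2) ∧
      Summable fun n : ℤ => Real.exp (2 * b * n) * (u n).2 ^ 2 := by
  refine ⟨fun h => ⟨h.of_nonneg_of_le (fun _ => by positivity) fun n => ?_,
    h.of_nonneg_of_le (fun _ => by positivity) fun n => ?_⟩, fun ⟨h1, h2⟩ => ?_⟩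
  · unfold nsq; gcongr; nlinarith
  · unfold nsq; gcongr; nlinarith
  · unfold Meml2w nsq; simpa only [mul_add] using h1.add h2

lemma tsum_weighted_nsq {b : ℝ} {u : ℤ → ℝ × ℝ}
    (h1 : Summable fun n : ℤ => Real.exp (2 * b * n) * (u n).1 ^ 2)
    (h2 : Summable fun n : ℤ => Real.exp (2 * b * n) * (u n).2 ^ 2) :
    ∑' n : ℤ, Real.exp (2 * b * n) * nsq (u n) =
      ∑' n : ℤ, Real.exp (2 * b * n) * (u n).1 ^ 2 +
        ∑' n : ℤ, Real.exp (2 * b * n) * (u n).2 ^ 2 := by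
  simp only [nsq, mul_add]
  exact h1.tsum_add h2

/-- Boundedness and right-inverse property of `J⁻¹` on the
backward-weighted space `ℓ²_{-a}`. -/
theorem Jinv_bounded_right_inverse (a : ℝ) (ha : 0 < a)
    (u : ℤ → ℝ × ℝ) (hu : Meml2w (-a) u) :
    (∀ n : ℤ, Summable (fun k : ℕ => |(u (n - (k : ℤ))).2|) ∧
      Summable fun k : ℕ => |(u (n - 1 - (k : ℤ))).1|) ∧
    Meml2w (-a) (Jinv u) ∧
    wnorm (-a) (Jinv u) ≤ (1 - Real.exp (-a))⁻¹ * wnorm (-a) u ∧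
    ∀ n : ℤ, ((Jinv u (n + 1)).2 - (Jinv u n).2,
      (Jinv u n).1 - (Jinv u (n - 1)).1) = u n := by
  have hb : -a < 0 := neg_lt_zero.mpr ha
  obtain ⟨hr, hp⟩ := meml2w_iff.mp hu
  have hJp := summable_weighted_sq_tailSum hb hp
  have hJr := summable_weighted_sq_comp_sub_one hb.le (summable_weighted_sq_tailSum hb hr)
  refine ⟨fun n => ⟨summable_abs_comp_sub hb hp n, summable_abs_comp_sub hb hr (n - 1)⟩,
    meml2w_iff.mpr ⟨hJp, hJr⟩, ?_, fun n => Prod.ext ?_ ?_⟩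
  · have hsq : ∑' n : ℤ, Real.exp (2 * -a * n) * nsq (Jinv u n) ≤
        (1 - Real.exp (-a))⁻¹ ^ 2 * ∑' n : ℤ, Real.exp (2 * -a * n) * nsq (u n) := by
      rw [tsum_weighted_nsq (u := Jinv u) hJp hJr, tsum_weighted_nsq hr hp]
      have h1 := tsum_weighted_sq_tailSum_le hb hp
      have h2 := (tsum_weighted_sq_comp_sub_one_le hb.le (summable_weighted_sq_tailSum hb hr)).trans
        (tsum_weighted_sq_tailSum_le hb hr)
      exact (add_le_add h1 h2).trans_eq (by ring)
    unfold wnorm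
    rw [← Real.sqrt_sq (inv_nonneg.mpr (sub_nonneg.mpr (Real.exp_lt_one_iff.mpr hb).le)),
      ← Real.sqrt_mul (sq_nonneg _)]
    exact Real.sqrt_le_sqrt hsq
  · show tailSum (fun m => (u m).1) (n + 1 - 1) - tailSum (fun m => (u m).1) (n - 1) = (u n).1
    rw [add_sub_cancel_right]
    exact tailSum_sub_tailSum_sub_one (summable_abs_comp_sub hb hr n).of_abs
  · show tailSum (fun m => (u m).2) n - tailSum (fun m => (u m).2) (n - 1) = (u n).2
    exact tailSum_sub_tailSum_sub_one (summable_abs_comp_sub hb hp n).of_abs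

end

end TodaPaper
end

section
/- Uniform comparison of tanh increments with sech²: There exist a₀ > 0 and C > 0 such that for every a ∈ (0, a₀] and every x ∈ ℝ, | ( tanh(ax) − tanh(a(x−1)) ) / ( a sech²(ax) ) − 1 | ≤ C a. Equivalently, with ψ_a(x) = 1 + tanh(ax) and ψ̃_a(x) = a^{1/2} sech(ax), one has sup_{x∈ℝ} | (ψ_a(x) − ψ_a(x−1)) / ψ̃_a(x)² − 1 | = O(a) as a ↓ 0. -/
open Real Filter Set MeasureTheory

namespace TodaPaper

noncomputable section

/-!
The subtraction formula for `tanh` turns the quotient into `(sinh a / a) * (cosh (a x) / cosh (a (x - 1)))`.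
The first factor lies in `[1, exp a]` and the second in `[exp (-a), exp a]`, so the quotient lies in
`[exp (-2a), exp (2a)]` and differs from `1` by at most `4a` as soon as `2a ≤ 1`.
-/

namespace Real

theorem tanh_sub_tanh (u v : ℝ) : tanh u - tanh v = sinh (u - v) / (cosh u * cosh v) := by
  rw [tanh_eq_sinh_div_cosh, tanh_eq_sinh_div_cosh,
    div_sub_div _ _ (cosh_pos u).ne' (cosh_pos v).ne', sinh_sub, mul_comm (cosh u)]

theorem cosh_add_le_exp_abs_mul_cosh (v d : ℝ) : cosh (v + d) ≤ exp |d| * cosh v := by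
  have h₁ : exp (v + d) ≤ exp |d| * exp v := by
    rw [← exp_add]; exact exp_le_exp.2 (by linarith [le_abs_self d])
  have h₂ : exp (-(v + d)) ≤ exp |d| * exp (-v) := by
    rw [← exp_add]; exact exp_le_exp.2 (by linarith [neg_abs_le d])
  rw [cosh_eq, cosh_eq]
  linarith

theorem cosh_add_div_cosh_mem_Icc (v d : ℝ) :
    cosh (v + d) / cosh v ∈ Set.Icc (exp (-|d|)) (exp |d|) := by
  have hv := cosh_pos v
  constructor
  · have h := cosh_add_le_exp_abs_mul_cosh (v + d) (-d)
    rw [add_neg_cancel_right, abs_neg] at h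
    rw [le_div_iff₀ hv, exp_neg, inv_mul_le_iff₀ (exp_pos _)]
    linarith
  · rw [div_le_iff₀ hv]
    exact cosh_add_le_exp_abs_mul_cosh v d

theorem sinh_le_mul_exp (a : ℝ) : sinh a ≤ a * exp a := by
  have h : exp a * exp (-(2 * a)) = exp (-a) := by rw [← exp_add]; ring_nf
  rw [sinh_eq]
  nlinarith [add_one_le_exp (-(2 * a)), exp_pos a]

theorem sinh_div_self_mem_Icc {a : ℝ} (ha : 0 < a) : sinh a / a ∈ Set.Icc 1 (exp a) :=
  ⟨(one_le_div ha).2 (self_le_sinh_iff.2 ha.le),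
    (div_le_iff₀ ha).2 ((sinh_le_mul_exp a).trans_eq (mul_comm _ _))⟩

theorem abs_sub_one_le_of_mem_Icc_exp {t b : ℝ} (hb : b ≤ 1)
    (ht : t ∈ Set.Icc (exp (-b)) (exp b)) : |t - 1| ≤ 2 * b := by
  have hb₀ : 0 ≤ b := by linarith [exp_le_exp.1 (ht.1.trans ht.2)]
  have hb₁ : |b| ≤ 1 := by rwa [abs_of_nonneg hb₀]
  have hup := abs_exp_sub_one_le hb₁
  have hlo := abs_exp_sub_one_le (x := -b) (by rwa [abs_neg])
  rw [abs_of_nonneg hb₀] at hup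
  rw [abs_neg, abs_of_nonneg hb₀] at hlo
  exact abs_le.2 ⟨by linarith [ht.1, (abs_le.1 hlo).1], by linarith [ht.2, (abs_le.1 hup).2]⟩

end Real

/-- Uniform comparison of tanh increments with sech². -/
theorem tanh_increment_comparison :
    ∃ a₀ > (0:ℝ), ∃ C > (0:ℝ), ∀ a : ℝ, 0 < a → a ≤ a₀ → ∀ x : ℝ,
      |(Real.tanh (a * x) - Real.tanh (a * (x - 1)))
          / (a * (1 / Real.cosh (a * x)) ^ 2) - 1| ≤ C * a := by
  refine ⟨1 / 2, by norm_num, 4, by norm_num, fun a ha ha₀ x => ?_⟩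
  have hx : a * x = a * (x - 1) + a := by ring
  have hquot : (tanh (a * x) - tanh (a * (x - 1))) / (a * (1 / cosh (a * x)) ^ 2)
      = sinh a / a * (cosh (a * (x - 1) + a) / cosh (a * (x - 1))) := by
    rw [Real.tanh_sub_tanh, hx, add_sub_cancel_left]
    field_simp
  obtain ⟨hs₁, hs₂⟩ := Real.sinh_div_self_mem_Icc ha
  obtain ⟨hr₁, hr₂⟩ := Real.cosh_add_div_cosh_mem_Icc (a * (x - 1)) a
  rw [abs_of_pos ha] at hr₁ hr₂
  have hlower : exp (-(2 * a)) ≤ sinh a / a * (cosh (a * (x - 1) + a) / cosh (a * (x - 1))) :=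
    calc exp (-(2 * a)) ≤ 1 * exp (-a) := by rw [one_mul]; exact exp_le_exp.2 (by linarith)
      _ ≤ _ := by gcongr
  have hupper : sinh a / a * (cosh (a * (x - 1) + a) / cosh (a * (x - 1))) ≤ exp (2 * a) :=
    calc _ ≤ exp a * exp a := by gcongr
      _ = exp (2 * a) := by rw [← exp_add, two_mul]
  rw [hquot]
  linarith [Real.abs_sub_one_le_of_mem_Icc_exp (by linarith) ⟨hlower, hupper⟩]

end

end TodaPaper
end
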